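/- arXiv:math/0407324 — 8 statements merged into one kernel-verified Lean document; each statement's English description precedes it below -/
import Mathlib

section
/- Let p ≥ 3 be a prime and let G be a subgroup of GL₂(𝔽_p) that is p-reduced, i.e. G has no nontrivial normal subgroup that is a p-group. If p divides the order of G, then G contains every matrix of determinant 1; that is, SL₂(𝔽_p) ≤ G. -/
open Matrix
namespace SL2Gen
variable {K : Type*} [Field K]

def up (t : K) : GL (Fin 2) K :=
  ⟨!![1, t; 0, 1], !![1, -t; 0, 1],
    by ext i j; fin_cases i <;> fin_cases j <;> simp [Matrix.mul_apply, Fin.sum_univ_two],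
    by ext i j; fin_cases i <;> fin_cases j <;> simp [Matrix.mul_apply, Fin.sum_univ_two]⟩
def lo (t : K) : GL (Fin 2) K :=
  ⟨!![1, 0; t, 1], !![1, 0; -t, 1],
    by ext i j; fin_cases i <;> fin_cases j <;> simp [Matrix.mul_apply, Fin.sum_univ_two],
    by ext i j; fin_cases i <;> fin_cases j <;> simp [Matrix.mul_apply, Fin.sum_univ_two]⟩
@[simp] lemma up_val (t : K) : (up t).val = !![1, t; 0, 1] := rfl
@[simp] lemma lo_val (t : K) : (lo t).val = !![1, 0; t, 1] := rfl

lemma up_mul (s t : K) : up s * up t = up (s + t) := by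
  apply Units.ext
  simp only [Units.val_mul, up_val]
  ext i j; fin_cases i <;> fin_cases j <;>
    simp [Matrix.mul_apply, Fin.sum_univ_two, add_comm]

lemma lo_mul (s t : K) : lo s * lo t = lo (s + t) := by
  apply Units.ext
  simp only [Units.val_mul, lo_val]
  ext i j; fin_cases i <;> fin_cases j <;>
    simp [Matrix.mul_apply, Fin.sum_univ_two, add_comm]

@[simp] lemma up_zero : up (0 : K) = 1 := by
  apply Units.ext
  simp only [up_val, Units.val_one]
  ext i j; fin_cases i <;> fin_cases j <;> simp

@[simp] lemma lo_zero : lo (0 : K) = 1 := by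
  apply Units.ext
  simp only [lo_val, Units.val_one]
  ext i j; fin_cases i <;> fin_cases j <;> simp

lemma up_pow (t : K) (n : ℕ) : (up t) ^ n = up ((n : K) * t) := by
  induction n with
  | zero => simp
  | succ n ih => rw [pow_succ, ih, up_mul]; push_cast; ring_nf

lemma lo_pow (t : K) (n : ℕ) : (lo t) ^ n = lo ((n : K) * t) := by
  induction n with
  | zero => simp
  | succ n ih => rw [pow_succ, ih, lo_mul]; push_cast; ring_nf

lemma mem_of_corner {G : Subgroup (GL (Fin 2) K)}
    (hU : ∀ t : K, up t ∈ G) (hL : ∀ t : K, lo t ∈ G)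
    (A : GL (Fin 2) K) (hdet : (A.val).det = 1) (hc : A.val 1 0 ≠ 0) : A ∈ G := by
  set P : Matrix (Fin 2) (Fin 2) K := A.val with hP
  rw [Matrix.det_fin_two] at hdet
  have key : A = up ((P 0 0 - 1) / P 1 0) * lo (P 1 0) * up ((P 1 1 - 1) / P 1 0) := by
    apply Units.ext
    simp only [Units.val_mul, up_val, lo_val, ← hP]
    have : P = !![P 0 0, P 0 1; P 1 0, P 1 1] := by
      ext i j; fin_cases i <;> fin_cases j <;> rfl
    rw [this]
    ext i j; fin_cases i <;> fin_cases j <;>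
      · simp [Matrix.mul_apply, Fin.sum_univ_two]
        try field_simp
        try linear_combination hdet
        try linear_combination -hdet
        try ring
  rw [key]
  exact mul_mem (mul_mem (hU _) (hL _)) (hU _)

lemma mem_of_det_one {G : Subgroup (GL (Fin 2) K)}
    (hU : ∀ t : K, up t ∈ G) (hL : ∀ t : K, lo t ∈ G)
    (A : GL (Fin 2) K) (hdet : (A.val).det = 1) : A ∈ G := by
  by_cases hc : A.val 1 0 ≠ 0
  · exact mem_of_corner hU hL A hdet hc
  push_neg at hc
  have h11 : A.val 1 1 ≠ 0 := by
    intro h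
    rw [Matrix.det_fin_two, hc, h] at hdet
    simp at hdet
  have hdet' : ((A * lo 1).val).det = 1 := by
    rw [Units.val_mul, Matrix.det_mul, hdet, lo_val, Matrix.det_fin_two]
    simp
  have hc' : (A * lo 1).val 1 0 ≠ 0 := by
    simp [Units.val_mul, Matrix.mul_apply, Fin.sum_univ_two, hc, h11]
  have hmem : A * lo 1 ∈ G := mem_of_corner hU hL _ hdet' hc'
  have : A = (A * lo 1) * (lo 1)⁻¹ := by group
  rw [this]
  exact mul_mem hmem (inv_mem (hL 1))

lemma cayley2 (N : Matrix (Fin 2) (Fin 2) K) :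
    N * N = N.trace • N - N.det • 1 := by
  ext i j; fin_cases i <;> fin_cases j <;>
    · simp [Matrix.mul_apply, Fin.sum_univ_two, Matrix.trace_fin_two,
        Matrix.det_fin_two, Matrix.one_apply]
      ring

lemma sq_zero (N : Matrix (Fin 2) (Fin 2) K) (m : ℕ) (hm : 2 ≤ m)
    (h : N ^ m = 0) (hN : N ≠ 0) : N * N = 0 := by
  have hm0 : m ≠ 0 := by omega
  have hd : N.det = 0 := by
    have : N.det ^ m = 0 := by rw [← Matrix.det_pow, h, Matrix.det_zero]
    exact pow_eq_zero_iff hm0 |>.mp this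
  have h2 : N * N = N.trace • N := by rw [cayley2, hd]; simp
  have hpow : ∀ k : ℕ, N ^ (k + 1) = N.trace ^ k • N := by
    intro k
    induction k with
    | zero => simp
    | succ k ih =>
      rw [pow_succ, ih, smul_mul_assoc, h2, smul_smul, pow_succ]
  have := hpow (m - 1)
  rw [Nat.sub_add_cancel (by omega), h] at this
  have ht : N.trace ^ (m - 1) = 0 := by
    rcases smul_eq_zero.mp this.symm with h' | h'
    · exact h'
    · exact absurd h' hN
  have : N.trace = 0 := pow_eq_zero_iff (by omega) |>.mp ht
  rw [h2, this, zero_smul]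

lemma unip_pow (N : Matrix (Fin 2) (Fin 2) K) (h : N * N = 0) (n : ℕ) :
    (1 + N) ^ n = 1 + (n : K) • N := by
  induction n with
  | zero => simp
  | succ n ih =>
    rw [pow_succ, ih, add_mul, mul_add, mul_add, one_mul, mul_one,
      smul_mul_assoc, h, smul_zero, add_zero]
    push_cast
    rw [add_smul, one_smul, one_mul, add_comm ((n:K) • N) N, ← add_assoc]

end SL2Gen

open SL2Gen in
/-- Let `p ≥ 3` be a prime and `G ≤ GL₂(𝔽_p)` a subgroup with no
nontrivial normal `p`-subgroup. If `p` divides `|G|`, then every matrix of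
determinant `1` belongs to `G`, i.e. `SL₂(𝔽_p) ≤ G`. -/
theorem sl2_le_of_pReduced_of_dvd_card (p : ℕ) (hp : p.Prime) (hp3 : 3 ≤ p)
    (G : Subgroup (Matrix.GeneralLinearGroup (Fin 2) (ZMod p)))
    (hred : ∀ N : Subgroup G, N.Normal → IsPGroup p N → N = ⊥)
    (hdvd : p ∣ Nat.card G) :
    ∀ A : Matrix.GeneralLinearGroup (Fin 2) (ZMod p),
      (A : Matrix (Fin 2) (Fin 2) (ZMod p)).det = 1 → A ∈ G := by
  haveI : Fact p.Prime := ⟨hp⟩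
  intro A hdetA
  -- Cauchy's theorem
  obtain ⟨x, hx⟩ := exists_prime_orderOf_dvd_card' (G := G) p hdvd
  set Z := Subgroup.zpowers x with hZdef
  have hZp : IsPGroup p Z := IsPGroup.of_card (by rw [Nat.card_zpowers, hx, pow_one])
  have hx1 : x ≠ 1 := by
    intro h; rw [h, orderOf_one] at hx; exact hp.one_lt.ne' hx.symm
  have hZbot : Z ≠ ⊥ := by
    intro h
    exact hx1 (Subgroup.mem_bot.mp (h ▸ Subgroup.mem_zpowers x))
  have hnn : ¬ Z.Normal := fun h => hZbot (hred Z h hZp)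
  have hexy : ¬ ∀ n ∈ Z, ∀ g : G, g * n * g⁻¹ ∈ Z := fun h => hnn ⟨h⟩
  push_neg at hexy
  obtain ⟨n, hnZ, g, hgn⟩ := hexy
  set y := g * n * g⁻¹ with hydef
  have hyZ : y ∉ Z := hgn
  have hy1 : y ≠ 1 := fun h => hyZ (h ▸ Z.one_mem)
  have hxp : x ^ p = 1 := by have h := pow_orderOf_eq_one x; rwa [hx] at h
  have hyp : y ^ p = 1 := by
    rw [hZdef, Subgroup.mem_zpowers_iff] at hnZ
    obtain ⟨k, hk⟩ := hnZ
    have hnp : n ^ p = 1 := by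
      rw [← hk, ← zpow_natCast, ← _root_.zpow_mul, mul_comm, _root_.zpow_mul,
        zpow_natCast, hxp, _root_.one_zpow]
    rw [hydef, conj_pow, hnp, mul_one, mul_inv_cancel]
  -- pass to matrices
  set B : Matrix (Fin 2) (Fin 2) (ZMod p) := ((x : GL (Fin 2) (ZMod p)) : Matrix (Fin 2) (Fin 2) (ZMod p)) with hBdef
  set C : Matrix (Fin 2) (Fin 2) (ZMod p) := ((y : GL (Fin 2) (ZMod p)) : Matrix (Fin 2) (Fin 2) (ZMod p)) with hCdef
  have hBp : B ^ p = 1 := by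
    have := congrArg (fun z : G => ((z : GL (Fin 2) (ZMod p)) : Matrix (Fin 2) (Fin 2) (ZMod p))) hxp
    simpa using this
  have hCp : C ^ p = 1 := by
    have := congrArg (fun z : G => ((z : GL (Fin 2) (ZMod p)) : Matrix (Fin 2) (Fin 2) (ZMod p))) hyp
    simpa using this
  set N : Matrix (Fin 2) (Fin 2) (ZMod p) := B - 1 with hNdef
  set M : Matrix (Fin 2) (Fin 2) (ZMod p) := C - 1 with hMdef
  have hB : B = 1 + N := by rw [hNdef]; abel
  have hC : C = 1 + M := by rw [hMdef]; abel
  have hN0 : N ≠ 0 := by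
    intro h
    apply hx1
    have hB1 : B = 1 := by rw [hB, h, add_zero]
    have h2 : (x : GL (Fin 2) (ZMod p)) = 1 :=
      Units.ext (by simp only [Units.val_one]; exact hB1)
    exact Subtype.ext (by simp only [OneMemClass.coe_one]; exact h2)
  have hM0 : M ≠ 0 := by
    intro h
    apply hy1
    have hC1 : C = 1 := by rw [hC, h, add_zero]
    have h2 : (y : GL (Fin 2) (ZMod p)) = 1 :=
      Units.ext (by simp only [Units.val_one]; exact hC1)
    exact Subtype.ext (by simp only [OneMemClass.coe_one]; exact h2)
  have hNp : N ^ p = 0 := by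
    rw [hNdef, sub_pow_char_of_commute p (Commute.one_right B), hBp, one_pow, sub_self]
  have hMp : M ^ p = 0 := by
    rw [hMdef, sub_pow_char_of_commute p (Commute.one_right C), hCp, one_pow, sub_self]
  have hNN : N * N = 0 := sq_zero N p hp.two_le hNp hN0
  have hMM : M * M = 0 := sq_zero M p hp.two_le hMp hM0
  -- M is not a scalar multiple of N
  have hMnot : ∀ t : ZMod p, M ≠ t • N := by
    intro t h
    apply hyZ
    have hcast : ((t.val : ℕ) : ZMod p) = t := by
      simp [ZMod.natCast_val, ZMod.cast_id]
    have hCB : C = B ^ t.val := by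
      rw [hB, unip_pow N hNN, hcast, hC, h]
    have hu : (y : GL (Fin 2) (ZMod p)) = (x : GL (Fin 2) (ZMod p)) ^ t.val :=
      Units.ext (by simpa using hCB)
    have hyx : y = x ^ t.val := Subtype.ext (by simpa using hu)
    rw [hyx]
    exact Subgroup.mem_zpowers_iff.mpr ⟨(t.val : ℤ), by rw [zpow_natCast]⟩
  -- entrywise consequences of N*N = 0
  have hsqN : ∀ i j, N i 0 * N 0 j + N i 1 * N 1 j = 0 := by
    intro i j
    have h := congrFun (congrFun hNN i) j
    simpa [Matrix.mul_apply, Fin.sum_univ_two] using h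
  -- construct the conjugating matrix S with N * S = S * E₁₂
  obtain ⟨S, Si, hS1, hS2, hNS⟩ :
      ∃ S Si : Matrix (Fin 2) (Fin 2) (ZMod p),
        S * Si = 1 ∧ Si * S = 1 ∧ N * S = S * !![0,1;0,0] := by
    by_cases hc : N 1 0 = 0
    · have ha : N 0 0 = 0 := by
        have h := hsqN 0 0; rw [hc, mul_zero, add_zero] at h
        exact mul_self_eq_zero.mp h
      have hd : N 1 1 = 0 := by
        have h := hsqN 1 1; rw [hc, zero_mul, zero_add] at h
        exact mul_self_eq_zero.mp h
      have hb : N 0 1 ≠ 0 := by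
        intro hb
        apply hN0
        ext i j; fin_cases i <;> fin_cases j <;> simp [ha, hb, hc, hd]
      refine ⟨!![N 0 1, 0; 0, 1], !![(N 0 1)⁻¹, 0; 0, 1], ?_, ?_, ?_⟩
      · ext i j; fin_cases i <;> fin_cases j <;>
          simp [Matrix.mul_apply, Fin.sum_univ_two, Matrix.one_apply, hb]
      · ext i j; fin_cases i <;> fin_cases j <;>
          simp [Matrix.mul_apply, Fin.sum_univ_two, Matrix.one_apply, hb]
      · ext i j; fin_cases i <;> fin_cases j <;>
          simp [Matrix.mul_apply, Fin.sum_univ_two, ha, hc, hd]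
    · refine ⟨!![N 0 0, 1; N 1 0, 0], !![0, (N 1 0)⁻¹; 1, -(N 0 0) * (N 1 0)⁻¹],
        ?_, ?_, ?_⟩
      · ext i j; fin_cases i <;> fin_cases j <;>
          · simp [Matrix.mul_apply, Fin.sum_univ_two, Matrix.one_apply]
            try field_simp
      · ext i j; fin_cases i <;> fin_cases j <;>
          · simp [Matrix.mul_apply, Fin.sum_univ_two, Matrix.one_apply]
            try field_simp
            try ring
      · ext i j; fin_cases i <;> fin_cases j <;>
          · simp [Matrix.mul_apply, Fin.sum_univ_two]
            try linear_combination hsqN 0 0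
            try linear_combination hsqN 1 0
  set E : Matrix (Fin 2) (Fin 2) (ZMod p) := !![0,1;0,0] with hEdef
  set U : GL (Fin 2) (ZMod p) := ⟨S, Si, hS1, hS2⟩ with hUdef
  set e : GL (Fin 2) (ZMod p) ≃* GL (Fin 2) (ZMod p) := MulAut.conj U⁻¹ with hedef
  set G' : Subgroup (GL (Fin 2) (ZMod p)) := Subgroup.map e.toMonoidHom G with hG'def
  have hUiv : (U⁻¹).val = Si := rfl
  have hval : ∀ g : GL (Fin 2) (ZMod p), (e g).val = Si * g.val * S := by
    intro g
    rw [hedef, MulAut.conj_apply, inv_inv, Units.val_mul, Units.val_mul, hUiv, hUdef]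
  -- up 1 belongs to G'
  have hone : (1 : Matrix (Fin 2) (Fin 2) (ZMod p)) + E = (up (1 : ZMod p)).val := by
    rw [up_val]; ext i j; fin_cases i <;> fin_cases j <;>
      simp [hEdef, Matrix.one_apply]
  have hup1 : up (1 : ZMod p) ∈ G' := by
    refine Subgroup.mem_map.mpr ⟨(x : GL (Fin 2) (ZMod p)), x.2, ?_⟩
    apply Units.ext
    rw [show e.toMonoidHom ((x : GL (Fin 2) (ZMod p))) = e (x : GL (Fin 2) (ZMod p)) from rfl,
      hval]
    calc Si * B * S = Si * ((1 + N) * S) := by rw [← hB, Matrix.mul_assoc]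
      _ = Si * (S * (1 + E)) := by
          rw [add_mul, one_mul, hNS]; noncomm_ring
      _ = (Si * S) * (1 + E) := by rw [Matrix.mul_assoc]
      _ = (up 1).val := by rw [hS2, one_mul, hone]
  have hcastval : ∀ t : ZMod p, ((t.val : ℕ) : ZMod p) = t := by
    intro t; simp [ZMod.natCast_val, ZMod.cast_id]
  have hupt : ∀ t : ZMod p, up t ∈ G' := by
    intro t
    have h1 := pow_mem hup1 t.val
    rwa [up_pow, mul_one, hcastval t] at h1
  -- the second unipotent in G'
  set M' : Matrix (Fin 2) (Fin 2) (ZMod p) := Si * M * S with hM'def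
  have hVmem : e (y : GL (Fin 2) (ZMod p)) ∈ G' :=
    Subgroup.mem_map.mpr ⟨(y : GL (Fin 2) (ZMod p)), y.2, rfl⟩
  have hVval : (e (y : GL (Fin 2) (ZMod p))).val = 1 + M' := by
    rw [hval]
    have h1 : Si * C * S = Si * S + Si * M * S := by rw [hC]; noncomm_ring
    rw [show ((y : GL (Fin 2) (ZMod p)) : Matrix (Fin 2) (Fin 2) (ZMod p)) = C from rfl,
      h1, hS2, hM'def]
  have hMS : M = S * M' * Si := by
    have h1 : S * (Si * M * S) * Si = (S * Si) * M * (S * Si) := by noncomm_ring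
    rw [hM'def, h1, hS1, one_mul, mul_one]
  have hM'M' : M' * M' = 0 := by
    have h1 : M' * M' = Si * (M * ((S * Si) * (M * S))) := by rw [hM'def]; noncomm_ring
    rw [h1, hS1, one_mul, show M * (M * S) = (M * M) * S by noncomm_ring, hMM]
    simp
  have hM'0 : M' ≠ 0 := by
    intro h
    apply hM0
    rw [hMS, h]; simp
  have hNE : N = S * E * Si := by
    calc N = (N * S) * Si := by rw [Matrix.mul_assoc, hS1, mul_one]
      _ = S * E * Si := by rw [hNS, hEdef]
  have hM'not : ∀ t : ZMod p, M' ≠ t • E := by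
    intro t h
    apply hMnot t
    rw [hMS, h, hNE]
    simp [Matrix.smul_mul, Matrix.mul_smul]
  have hsqM' : ∀ i j, M' i 0 * M' 0 j + M' i 1 * M' 1 j = 0 := by
    intro i j
    have h := congrFun (congrFun hM'M' i) j
    simpa [Matrix.mul_apply, Fin.sum_univ_two] using h
  have hc0 : M' 1 0 ≠ 0 := by
    intro hc
    have ha : M' 0 0 = 0 := by
      have h := hsqM' 0 0; rw [hc, mul_zero, add_zero] at h
      exact mul_self_eq_zero.mp h
    have hd : M' 1 1 = 0 := by
      have h := hsqM' 1 1; rw [hc, zero_mul, zero_add] at h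
      exact mul_self_eq_zero.mp h
    apply hM'not (M' 0 1)
    ext i j; fin_cases i <;> fin_cases j <;> simp [hEdef, ha, hc, hd]
  have hda : M' 1 1 = - M' 0 0 := by
    have h2 : (M' 0 0 + M' 1 1) * M' 1 0 = 0 := by linear_combination hsqM' 1 0
    rcases mul_eq_zero.mp h2 with h3 | h3
    · exact eq_neg_of_add_eq_zero_right h3
    · exact absurd h3 hc0
  have hbc : M' 0 0 * M' 0 0 + M' 0 1 * M' 1 0 = 0 := hsqM' 0 0
  have hW : up (-(M' 0 0 / M' 1 0)) * e (y : GL (Fin 2) (ZMod p)) * up (M' 0 0 / M' 1 0)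
      = lo (M' 1 0) := by
    apply Units.ext
    simp only [Units.val_mul, up_val, lo_val, hVval]
    have hM'mat : (1 : Matrix (Fin 2) (Fin 2) (ZMod p)) + M'
        = !![1 + M' 0 0, M' 0 1; M' 1 0, 1 + - M' 0 0] := by
      ext i j; fin_cases i <;> fin_cases j <;>
        simp [hda, Matrix.one_apply]
    rw [hM'mat]
    ext i j; fin_cases i <;> fin_cases j <;>
      · simp [Matrix.mul_apply, Fin.sum_univ_two]
        try field_simp
        try ring_nf
        try linear_combination hbc
        try linear_combination M' 1 0 * hbc
        try linear_combination - hbc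
  have hloc : lo (M' 1 0) ∈ G' := by
    rw [← hW]
    exact mul_mem (mul_mem (hupt _) hVmem) (hupt _)
  have hlot : ∀ s : ZMod p, lo s ∈ G' := by
    intro s
    have h1 := pow_mem hloc (s * (M' 1 0)⁻¹).val
    rw [lo_pow, hcastval] at h1
    rwa [show s * (M' 1 0)⁻¹ * M' 1 0 = s by field_simp] at h1
  -- conclude via the generation lemma
  have hdet' : ((e A).val).det = 1 := by
    rw [hval, Matrix.det_mul, Matrix.det_mul]
    have h2 : Si.det * S.det = 1 := by rw [← Matrix.det_mul, hS2, Matrix.det_one]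
    have h3 : A.val.det = 1 := hdetA
    calc Si.det * A.val.det * S.det = (Si.det * S.det) * A.val.det := by ring
      _ = 1 := by rw [h2, h3, one_mul]
  have hfin : e A ∈ G' := mem_of_det_one hupt hlot (e A) hdet'
  rw [hG'def, Subgroup.mem_map_equiv, MulEquiv.symm_apply_apply] at hfin
  exact hfin
end

section
/- Let p be an odd prime and let n, m be integers with 0 < n < m. Then the automorphism group of ℤ/pⁿ × ℤ/pᵐ has a unique (hence normal) Sylow p-subgroup; this normal Sylow p-subgroup has order p^{3n+m-2}. -/
section Aux

private abbrev Gp (p n m : ℕ) := ZMod (p ^ n) × ZMod (p ^ m)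

variable {p n m : ℕ}

instance addAutGroupOfMultiplicative (M : Type*) [Add M] : Group (AddAut M) :=
  inferInstanceAs (Group (Multiplicative (AddAut M)))

private lemma val_smul_add {M : Type*} [AddCommMonoid M] {N : ℕ} [NeZero N] {g : M}
    (hg : N • g = 0) (x y : ZMod N) :
    (x + y).val • g = x.val • g + y.val • g := by
  have key : ∀ s : ℕ, (s % N) • g = s • g := by
    intro s
    conv_rhs => rw [← Nat.mod_add_div s N]
    rw [add_nsmul, mul_comm N (s / N), mul_smul, hg, smul_zero, add_zero]
  rw [ZMod.val_add, key, add_nsmul]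

private lemma natCast_val_self {N : ℕ} [NeZero N] (x : ZMod N) :
    ((x.val : ℕ) : ZMod N) = x := by
  rw [ZMod.natCast_val, ZMod.cast_id]

private lemma pn_smul_one_zero [NeZero (p ^ n)] :
    (p ^ n) • ((1, 0) : Gp p n m) = 0 := by
  rw [Prod.ext_iff]
  constructor
  · simp [nsmul_eq_mul, ZMod.natCast_self]
  · simp

private lemma pm_smul (hnm : n ≤ m) (g : Gp p n m) : (p ^ m) • g = 0 := by
  have h1 : ((p ^ m : ℕ) : ZMod (p ^ n)) = 0 :=
    (ZMod.natCast_eq_zero_iff _ _).mpr (pow_dvd_pow p hnm)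
  have h2 : ((p ^ m : ℕ) : ZMod (p ^ m)) = 0 := ZMod.natCast_self _
  rw [Prod.ext_iff]
  constructor
  · show (p ^ m) • g.1 = (0 : ZMod (p ^ n))
    rw [nsmul_eq_mul, h1, zero_mul]
  · show (p ^ m) • g.2 = (0 : ZMod (p ^ m))
    rw [nsmul_eq_mul, h2, zero_mul]

private lemma apply_eq {F : Type*} [FunLike F (Gp p n m) (Gp p n m)]
    [AddMonoidHomClass F (Gp p n m) (Gp p n m)] [NeZero (p ^ n)] [NeZero (p ^ m)]
    (f : F) (x : Gp p n m) :
    f x = x.1.val • f (1, 0) + x.2.val • f (0, 1) := by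
  have hx : x = x.1.val • ((1, 0) : Gp p n m) + x.2.val • ((0, 1) : Gp p n m) := by
    rw [Prod.ext_iff]
    constructor
    · simp [nsmul_eq_mul, natCast_val_self]
    · simp [nsmul_eq_mul, natCast_val_self]
  conv_lhs => rw [hx]
  rw [map_add, map_nsmul, map_nsmul]

private lemma torsion_e1 {F : Type*} [FunLike F (Gp p n m) (Gp p n m)]
    [AddMonoidHomClass F (Gp p n m) (Gp p n m)] [NeZero (p ^ n)]
    (f : F) : (p ^ n) • f ((1, 0) : Gp p n m) = 0 := by
  rw [← map_nsmul, pn_smul_one_zero, map_zero]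


private lemma val_cast_p {N : ℕ} [NeZero N] (h : p ∣ N) (x : ZMod N) :
    ((x.val : ℕ) : ZMod p) = ZMod.castHom h (ZMod p) x := by
  rw [ZMod.natCast_val, ZMod.castHom_apply]

private lemma cast_eq_zero_of_torsion (hp : p.Prime) (hn : 0 < n) (hnm : n < m)
    [NeZero (p ^ m)]
    {z : ZMod (p ^ m)} (hz : (p ^ n) • z = 0) :
    ZMod.castHom (dvd_pow_self p (by omega : m ≠ 0)) (ZMod p) z = 0 := by
  have hval : (p : ℕ) ∣ z.val := by
    have h1 : ((p ^ n * z.val : ℕ) : ZMod (p ^ m)) = 0 := by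
      have hz' : ((p ^ n : ℕ) : ZMod (p ^ m)) * z = 0 := by rw [← nsmul_eq_mul]; exact hz
      push_cast
      rw [natCast_val_self]
      push_cast at hz'
      exact hz'
    have h2 : p ^ n * p ^ (m - n) ∣ p ^ n * z.val := by
      have := (ZMod.natCast_eq_zero_iff _ _).mp h1
      rwa [show p ^ n * p ^ (m - n) = p ^ m by rw [← pow_add]; congr 1; omega]
    have h4 : p ^ (m - n) ∣ z.val :=
      (mul_dvd_mul_iff_left (pow_ne_zero n hp.pos.ne')).mp h2
    exact dvd_trans (dvd_pow_self p (by omega : m - n ≠ 0)) h4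
  rw [← val_cast_p]
  exact (ZMod.natCast_eq_zero_iff _ _).mpr hval

private lemma exists_p_smul {N : ℕ} [NeZero N] (h : p ∣ N) {u : ZMod N}
    (hu : ZMod.castHom h (ZMod p) u = 0) : ∃ v : ZMod N, u = p • v := by
  have hval : p ∣ u.val := by
    rw [← val_cast_p h] at hu
    exact (ZMod.natCast_eq_zero_iff _ _).mp hu
  refine ⟨((u.val / p : ℕ) : ZMod N), ?_⟩
  rw [nsmul_eq_mul, ← Nat.cast_mul, Nat.mul_div_cancel' hval, natCast_val_self]


private def chi (hn : n ≠ 0) (hm : m ≠ 0) (f : AddAut (Gp p n m)) : ZMod p × ZMod p :=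
  (ZMod.castHom (dvd_pow_self p hn) (ZMod p) (f (1, 0)).1,
   ZMod.castHom (dvd_pow_self p hm) (ZMod p) (f (0, 1)).2)

private lemma chi_one (hn : n ≠ 0) (hm : m ≠ 0) [NeZero (p ^ n)] [NeZero (p ^ m)] :
    chi (p := p) (n := n) (m := m) hn hm 1 = 1 := by
  have h : chi hn hm (1 : AddAut (Gp p n m)) =
      (ZMod.castHom (dvd_pow_self p hn) (ZMod p) 1,
       ZMod.castHom (dvd_pow_self p hm) (ZMod p) 1) := rfl
  rw [h, map_one, map_one]
  rfl


private lemma chi_mul (hp : p.Prime) (hn : 0 < n) (hnm : n < m)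
    [NeZero (p ^ n)] [NeZero (p ^ m)] (f g : AddAut (Gp p n m)) :
    chi (p := p) hn.ne' (by omega : m ≠ 0) (f * g) =
      chi hn.ne' (by omega) f * chi hn.ne' (by omega) g := by
  set r1 := ZMod.castHom (dvd_pow_self p hn.ne') (ZMod p) with hr1
  set r2 := ZMod.castHom (dvd_pow_self p (by omega : m ≠ 0)) (ZMod p) with hr2
  have hcast1 : ∀ x : ZMod (p ^ n), ((x.val : ℕ) : ZMod p) = r1 x := fun x => val_cast_p _ x
  have hcast2 : ∀ x : ZMod (p ^ m), ((x.val : ℕ) : ZMod p) = r2 x := fun x => val_cast_p _ x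
  have hto : ∀ h : AddAut (Gp p n m), r2 (h (1, 0)).2 = 0 := by
    intro h
    refine cast_eq_zero_of_torsion hp hn hnm ?_
    have := torsion_e1 (p := p) (n := n) (m := m) h
    calc (p ^ n) • (h (1, 0)).2 = ((p ^ n) • h (1, 0)).2 := rfl
    _ = ((0 : Gp p n m)).2 := by rw [this]
    _ = 0 := rfl
  have happ : ∀ (h : AddAut (Gp p n m)) (x : Gp p n m),
      h x = x.1.val • h (1, 0) + x.2.val • h (0, 1) := fun h x => apply_eq h x
  have hmulapp : ∀ x : Gp p n m, (f * g) x = f (g x) := fun _ => rfl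
  refine Prod.ext ?_ ?_
  · show r1 ((f * g) (1, 0)).1 = r1 (f (1, 0)).1 * r1 (g (1, 0)).1
    rw [hmulapp, happ f (g (1, 0))]
    have : (((g (1,0)).1.val • f (1, 0) + (g (1,0)).2.val • f (0, 1)) : Gp p n m).1
        = (g (1,0)).1.val • (f (1, 0)).1 + (g (1,0)).2.val • (f (0, 1)).1 := rfl
    rw [this, map_add, map_nsmul, map_nsmul, nsmul_eq_mul, nsmul_eq_mul,
      hcast1, hcast2, hto g, zero_mul, add_zero, mul_comm]
  · show r2 ((f * g) (0, 1)).2 = r2 (f (0, 1)).2 * r2 (g (0, 1)).2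
    rw [hmulapp, happ f (g (0, 1))]
    have : (((g (0,1)).1.val • f (1, 0) + (g (0,1)).2.val • f (0, 1)) : Gp p n m).2
        = (g (0,1)).1.val • (f (1, 0)).2 + (g (0,1)).2.val • (f (0, 1)).2 := rfl
    rw [this, map_add, map_nsmul, map_nsmul, nsmul_eq_mul, nsmul_eq_mul,
      hcast1, hcast2, hto f, mul_zero, zero_add, mul_comm]

private def phi (hp : p.Prime) (hn : 0 < n) (hnm : n < m)
    [NeZero (p ^ n)] [NeZero (p ^ m)] :
    AddAut (Gp p n m) →* (ZMod p × ZMod p)ˣ where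
  toFun f :=
    { val := chi hn.ne' (by omega : m ≠ 0) f
      inv := chi hn.ne' (by omega) f⁻¹
      val_inv := by rw [← chi_mul hp hn hnm, mul_inv_cancel, chi_one]
      inv_val := by rw [← chi_mul hp hn hnm, inv_mul_cancel, chi_one] }
  map_one' := Units.ext (chi_one hn.ne' (by omega))
  map_mul' f g := Units.ext (chi_mul hp hn hnm f g)

private def mkEnd (hnm : n ≤ m) [NeZero (p ^ n)] [NeZero (p ^ m)]
    (a b : ZMod (p ^ n)) (c d : ZMod (p ^ m)) (hc : (p ^ n) • c = 0) :
    Gp p n m →+ Gp p n m where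
  toFun x := x.1.val • ((a, c) : Gp p n m) + x.2.val • ((b, d) : Gp p n m)
  map_zero' := by simp [ZMod.val_zero]
  map_add' x y := by
    have h1 : (p ^ n) • ((a, c) : Gp p n m) = 0 := by
      refine Prod.ext ?_ ?_
      · show (p ^ n) • a = (0 : ZMod (p ^ n))
        rw [nsmul_eq_mul, ZMod.natCast_self, zero_mul]
      · exact hc
    have h2 : (p ^ m) • ((b, d) : Gp p n m) = 0 := pm_smul hnm _
    show (x + y).1.val • _ + (x + y).2.val • _ = _
    rw [Prod.fst_add, Prod.snd_add, val_smul_add h1, val_smul_add h2]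
    abel

private lemma mkEnd_apply (hnm : n ≤ m) [NeZero (p ^ n)] [NeZero (p ^ m)]
    (hlt : 1 < p ^ n) (hlt2 : 1 < p ^ m)
    (a b : ZMod (p ^ n)) (c d : ZMod (p ^ m)) (hc : (p ^ n) • c = 0)
    (hf1 : Fact (1 < p ^ n) := ⟨hlt⟩) (hf2 : Fact (1 < p ^ m) := ⟨hlt2⟩) :
    mkEnd hnm a b c d hc (1, 0) = (a, c) ∧ mkEnd hnm a b c d hc (0, 1) = (b, d) := by
  constructor
  · show (1 : ZMod (p ^ n)).val • ((a, c) : Gp p n m)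
        + (0 : ZMod (p ^ m)).val • ((b, d) : Gp p n m) = _
    haveI := hf1; haveI := hf2
    rw [ZMod.val_one _, ZMod.val_zero, one_smul, zero_smul, add_zero]
  · show (0 : ZMod (p ^ n)).val • ((a, c) : Gp p n m)
        + (1 : ZMod (p ^ m)).val • ((b, d) : Gp p n m) = _
    haveI := hf1; haveI := hf2
    rw [ZMod.val_one _, ZMod.val_zero, one_smul, zero_smul, zero_add]

private lemma exists_addAut (hp : p.Prime) (hn : 0 < n) (hnm : n < m)
    [NeZero (p ^ n)] [NeZero (p ^ m)]
    (a b : ZMod (p ^ n)) (c d : ZMod (p ^ m)) (hc : (p ^ n) • c = 0)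
    (ha : ZMod.castHom (dvd_pow_self p hn.ne') (ZMod p) a = 1)
    (hd : ZMod.castHom (dvd_pow_self p (by omega : m ≠ 0)) (ZMod p) d = 1) :
    ∃ f : AddAut (Gp p n m), f (1, 0) = (a, c) ∧ f (0, 1) = (b, d) := by
  set r1 := ZMod.castHom (dvd_pow_self p hn.ne') (ZMod p) with hr1
  set r2 := ZMod.castHom (dvd_pow_self p (by omega : m ≠ 0)) (ZMod p) with hr2
  set E : AddMonoid.End (Gp p n m) := mkEnd hnm.le a b c d hc with hE
  set η : AddMonoid.End (Gp p n m) := E - 1 with heta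
  have hcast1 : ∀ x : ZMod (p ^ n), ((x.val : ℕ) : ZMod p) = r1 x := fun x => val_cast_p _ x
  have hcast2 : ∀ x : ZMod (p ^ m), ((x.val : ℕ) : ZMod p) = r2 x := fun x => val_cast_p _ x
  have hrc : r2 c = 0 := cast_eq_zero_of_torsion hp hn hnm hc
  have hfst : ∀ x : Gp p n m, r1 (η x).1 = r2 x.2 * r1 b := by
    intro x
    have h1 : (η x).1 = (x.1.val • a + x.2.val • b) - x.1 := rfl
    rw [h1, map_sub, map_add, map_nsmul, map_nsmul, nsmul_eq_mul, nsmul_eq_mul,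
      hcast1, hcast2, ha, mul_one, add_sub_cancel_left]
  have hsnd : ∀ x : Gp p n m, r2 (η x).2 = 0 := by
    intro x
    have h1 : (η x).2 = (x.1.val • c + x.2.val • d) - x.2 := rfl
    rw [h1, map_sub, map_add, map_nsmul, map_nsmul, nsmul_eq_mul, nsmul_eq_mul,
      hcast1, hcast2, hrc, hd, mul_zero, mul_one, zero_add, sub_self]
  have hsq : ∀ x : Gp p n m, ∃ y, (η * η) x = p • y := by
    intro x
    have hx1 : r1 ((η (η x)).1) = 0 := by rw [hfst (η x), hsnd x, zero_mul]
    have hx2 : r2 ((η (η x)).2) = 0 := hsnd (η x)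
    obtain ⟨v1, hv1⟩ := exists_p_smul _ hx1
    obtain ⟨v2, hv2⟩ := exists_p_smul _ hx2
    exact ⟨(v1, v2), Prod.ext hv1 hv2⟩
  have hpow : ∀ k : ℕ, ∀ x : Gp p n m, ∃ y, ((η * η) ^ k) x = (p ^ k) • y := by
    intro k
    induction k with
    | zero => intro x; exact ⟨x, by simp [AddMonoid.End.one_apply]⟩
    | succ k ih =>
      intro x
      obtain ⟨y0, hy0⟩ := hsq x
      obtain ⟨y1, hy1⟩ := ih y0
      refine ⟨y1, ?_⟩
      have h1 : ((η * η) ^ (k + 1)) x = ((η * η) ^ k) ((η * η) x) := by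
        rw [pow_succ]; rfl
      rw [h1, hy0, map_nsmul, hy1, smul_smul, ← pow_succ']
  have hnil : η ^ (2 * m) = 0 := by
    have h1 : η ^ (2 * m) = (η * η) ^ m := by rw [pow_mul, pow_two]
    refine AddMonoidHom.ext fun x => ?_
    obtain ⟨y, hy⟩ := hpow m x
    rw [h1]
    show ((η * η) ^ m) x = 0
    rw [hy, pm_smul hnm.le]
  have hunit : IsUnit E := by
    have h1 : IsNilpotent η := ⟨2 * m, hnil⟩
    have h2 := h1.isUnit_one_add
    have h3 : (1 : AddMonoid.End (Gp p n m)) + η = E := by rw [heta]; abel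
    rwa [h3] at h2
  obtain ⟨u, hu⟩ := hunit
  have hleft : ∀ x, (↑u⁻¹ : AddMonoid.End (Gp p n m)) (E x) = x := by
    intro x
    calc (↑u⁻¹ : AddMonoid.End (Gp p n m)) (E x)
        = ((↑u⁻¹ * ↑u : AddMonoid.End (Gp p n m))) x := by rw [hu]; rfl
      _ = x := by rw [u.inv_mul]; rfl
  have hright : ∀ x, E ((↑u⁻¹ : AddMonoid.End (Gp p n m)) x) = x := by
    intro x
    calc E ((↑u⁻¹ : AddMonoid.End (Gp p n m)) x)
        = ((↑u * ↑u⁻¹ : AddMonoid.End (Gp p n m))) x := by rw [hu]; rfl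
      _ = x := by rw [u.mul_inv]; rfl
  have hone : 1 < p ^ n := Nat.one_lt_pow hn.ne' hp.one_lt
  have hone2 : 1 < p ^ m := Nat.one_lt_pow (by omega) hp.one_lt
  obtain ⟨hv1, hv2⟩ := mkEnd_apply (p := p) hnm.le hone hone2 a b c d hc
  refine ⟨AddEquiv.mk' ⟨(E : Gp p n m → Gp p n m),
    ((↑u⁻¹ : AddMonoid.End (Gp p n m)) : Gp p n m → Gp p n m), hleft, hright⟩
    E.map_add, ?_, ?_⟩
  · exact hv1
  · exact hv2

private lemma card_ker_mul_card_range {A B : Type*} [AddCommGroup A] [AddCommGroup B]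
    (f : A →+ B) : Nat.card f.ker * Nat.card f.range = Nat.card A := by
  rw [← AddSubgroup.card_mul_index f.ker, AddSubgroup.index_ker]

private lemma card_fiber_one {N : ℕ} [NeZero N] (hp : p.Prime) (h : p ∣ N) :
    Nat.card {x : ZMod N // ZMod.castHom h (ZMod p) x = 1} * p = N := by
  haveI : NeZero p := ⟨hp.pos.ne'⟩
  set f := ZMod.castHom h (ZMod p) with hf
  set g : ZMod N →+ ZMod p := f.toAddMonoidHom with hg
  have hsurj : Function.Surjective g := by
    intro y
    refine ⟨((y.val : ℕ) : ZMod N), ?_⟩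
    show f _ = y
    rw [map_natCast, natCast_val_self]
  have e1 : {x : ZMod N // f x = 1} ≃ {x : ZMod N // f x = 0} :=
    { toFun := fun x => ⟨x.1 - 1, by rw [map_sub, x.2, map_one, sub_self]⟩
      invFun := fun x => ⟨x.1 + 1, by rw [map_add, x.2, map_one, zero_add]⟩
      left_inv := fun x => by simp
      right_inv := fun x => by simp }
  have e2 : {x : ZMod N // f x = 0} ≃ g.ker :=
    Equiv.subtypeEquivRight fun x => by
      rw [AddMonoidHom.mem_ker]; exact Iff.rfl
  have hcard : Nat.card {x : ZMod N // f x = 1} = Nat.card g.ker :=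
    Nat.card_congr (e1.trans e2)
  have hrange : Nat.card g.range = p := by
    rw [AddMonoidHom.range_eq_top.mpr hsurj, AddSubgroup.card_top, Nat.card_zmod]
  have := card_ker_mul_card_range g
  rw [hrange, Nat.card_zmod] at this
  rw [hcard]
  exact this

private lemma card_torsion (hp : p.Prime) (hn : 0 < n) (hnm : n ≤ m) [NeZero (p ^ m)] :
    Nat.card {c : ZMod (p ^ m) // (p ^ n) • c = 0} * p ^ (m - n) = p ^ m := by
  set gel : ZMod (p ^ m) := ((p ^ n : ℕ) : ZMod (p ^ m)) with hgel
  set μ : ZMod (p ^ m) →+ ZMod (p ^ m) := AddMonoidHom.mulLeft gel with hμ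
  have hμapp : ∀ x, μ x = gel * x := fun _ => rfl
  have e1 : {c : ZMod (p ^ m) // (p ^ n) • c = 0} ≃ μ.ker :=
    Equiv.subtypeEquivRight fun x => by
      rw [AddMonoidHom.mem_ker, hμapp, ← nsmul_eq_mul]
  have hrange : μ.range = AddSubgroup.zmultiples gel := by
    ext z
    constructor
    · rintro ⟨x, rfl⟩
      rw [AddSubgroup.mem_zmultiples_iff]
      refine ⟨(x.val : ℤ), ?_⟩
      rw [natCast_zsmul, nsmul_eq_mul, natCast_val_self, hμapp, mul_comm]
    · intro hz
      rw [AddSubgroup.mem_zmultiples_iff] at hz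
      obtain ⟨k, rfl⟩ := hz
      exact ⟨((k : ℤ) : ZMod (p ^ m)), by rw [hμapp, mul_comm, ← zsmul_eq_mul]⟩
  have hor : addOrderOf gel = p ^ (m - n) := by
    rw [hgel, ZMod.addOrderOf_coe _ (NeZero.ne _), Nat.gcd_comm,
      Nat.gcd_eq_left (pow_dvd_pow p hnm), Nat.pow_div hnm hp.pos]
  have hcr : Nat.card μ.range = p ^ (m - n) := by
    rw [hrange, Nat.card_zmultiples, hor]
  have := card_ker_mul_card_range μ
  rw [hcr, Nat.card_zmod] at this
  rw [Nat.card_congr e1]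
  exact this

end Aux

/-- For an odd prime `p` and integers `0 < n < m`, the automorphism
group of `ℤ/pⁿ × ℤ/pᵐ` has a unique (hence normal) Sylow `p`-subgroup, which has
order `p^(3n+m-2)`. -/
theorem sylow_addAut_zmod_prod_unique (p n m : ℕ) (hp : p.Prime) (hodd : Odd p)
    (hn : 0 < n) (hnm : n < m) :
    (∀ P Q : Sylow p (Multiplicative (AddAut (ZMod (p ^ n) × ZMod (p ^ m)))), P = Q) ∧
    ∀ P : Sylow p (Multiplicative (AddAut (ZMod (p ^ n) × ZMod (p ^ m)))),
      (P : Subgroup (Multiplicative (AddAut (ZMod (p ^ n) × ZMod (p ^ m))))).Normal ∧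
      Nat.card P = p ^ (3 * n + m - 2) := by
  show (∀ P Q : Sylow p (AddAut (ZMod (p ^ n) × ZMod (p ^ m))), P = Q) ∧
    ∀ P : Sylow p (AddAut (ZMod (p ^ n) × ZMod (p ^ m))),
      (P : Subgroup (AddAut (ZMod (p ^ n) × ZMod (p ^ m)))).Normal ∧
      Nat.card P = p ^ (3 * n + m - 2)
  haveI : Fact p.Prime := ⟨hp⟩
  haveI : NeZero (p ^ n) := ⟨pow_ne_zero n hp.pos.ne'⟩
  haveI : NeZero (p ^ m) := ⟨pow_ne_zero m hp.pos.ne'⟩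
  haveI : NeZero p := ⟨hp.pos.ne'⟩
  haveI : Finite (AddAut (Gp p n m)) :=
    Finite.of_injective (fun f => (f : Gp p n m → Gp p n m)) DFunLike.coe_injective
  set Φ : AddAut (Gp p n m) →* (ZMod p × ZMod p)ˣ := phi hp hn hnm with hΦ
  set N : Subgroup (AddAut (Gp p n m)) := Φ.ker with hNdef
  set r1 := ZMod.castHom (dvd_pow_self p hn.ne') (ZMod p) with hr1
  set r2 := ZMod.castHom (dvd_pow_self p (by omega : m ≠ 0)) (ZMod p) with hr2
  have hmem : ∀ f : AddAut (Gp p n m),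
      f ∈ N ↔ (r1 (f (1, 0)).1 = 1 ∧ r2 (f (0, 1)).2 = 1) := by
    intro f
    rw [hNdef, MonoidHom.mem_ker]
    constructor
    · intro h
      have h1 : (Φ f).val = (1 : ZMod p × ZMod p) := by rw [h]; rfl
      exact ⟨congrArg Prod.fst h1, congrArg Prod.snd h1⟩
    · rintro ⟨h1, h2⟩
      exact Units.ext (Prod.ext h1 h2)
  have hctor : ∀ f : AddAut (Gp p n m), (p ^ n) • (f (1, 0)).2 = 0 :=
    fun f => congrArg Prod.snd (torsion_e1 f)
  have hcardN : Nat.card N = p ^ (3 * n + m - 2) := by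
    set S := {a : ZMod (p ^ n) // r1 a = 1} × ZMod (p ^ n) ×
      {c : ZMod (p ^ m) // (p ^ n) • c = 0} × {d : ZMod (p ^ m) // r2 d = 1} with hS
    let Ψ : N → S := fun f =>
      (⟨(f.1 (1, 0)).1, ((hmem f.1).mp f.2).1⟩, (f.1 (0, 1)).1,
       ⟨(f.1 (1, 0)).2, hctor f.1⟩, ⟨(f.1 (0, 1)).2, ((hmem f.1).mp f.2).2⟩)
    have hbij : Function.Bijective Ψ := by
      constructor
      · intro f g h
        have h1 : (f.1 (1, 0)).1 = (g.1 (1, 0)).1 :=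
          congrArg (fun q : S => (q.1 : ZMod (p ^ n))) h
        have h2 : (f.1 (0, 1)).1 = (g.1 (0, 1)).1 :=
          congrArg (fun q : S => q.2.1) h
        have h3 : (f.1 (1, 0)).2 = (g.1 (1, 0)).2 :=
          congrArg (fun q : S => (q.2.2.1 : ZMod (p ^ m))) h
        have h4 : (f.1 (0, 1)).2 = (g.1 (0, 1)).2 :=
          congrArg (fun q : S => (q.2.2.2 : ZMod (p ^ m))) h
        have e1 : f.1 (1, 0) = g.1 (1, 0) := Prod.ext h1 h3
        have e2 : f.1 (0, 1) = g.1 (0, 1) := Prod.ext h2 h4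
        refine Subtype.ext (DFunLike.ext _ _ fun x => ?_)
        rw [apply_eq f.1 x, apply_eq g.1 x, e1, e2]
      · rintro ⟨⟨a, ha⟩, b, ⟨c, hc⟩, ⟨d, hd⟩⟩
        obtain ⟨f, hf1, hf2⟩ := exists_addAut hp hn hnm a b c d hc ha hd
        have hfN : f ∈ N := (hmem f).mpr ⟨by rw [hf1]; exact ha, by rw [hf2]; exact hd⟩
        refine ⟨⟨f, hfN⟩, ?_⟩
        refine Prod.ext (Subtype.ext ?_) (Prod.ext ?_ (Prod.ext (Subtype.ext ?_) (Subtype.ext ?_)))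
        · show (f (1, 0)).1 = a; rw [hf1]
        · show (f (0, 1)).1 = b; rw [hf2]
        · show (f (1, 0)).2 = c; rw [hf1]
        · show (f (0, 1)).2 = d; rw [hf2]
    have h1 : Nat.card N = Nat.card S := Nat.card_eq_of_bijective Ψ hbij
    have c1 : Nat.card {a : ZMod (p ^ n) // r1 a = 1} * p = p ^ n := by
      rw [hr1]; exact card_fiber_one hp _
    have c2 : Nat.card {c : ZMod (p ^ m) // (p ^ n) • c = 0} * p ^ (m - n) = p ^ m :=
      card_torsion hp hn hnm.le
    have c3 : Nat.card {d : ZMod (p ^ m) // r2 d = 1} * p = p ^ m := by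
      rw [hr2]; exact card_fiber_one hp _
    rw [h1, hS, Nat.card_prod, Nat.card_prod, Nat.card_prod, Nat.card_zmod]
    refine Nat.eq_of_mul_eq_mul_right
      (show 0 < p * (p ^ (m - n) * p) by have := hp.pos; positivity) ?_
    calc Nat.card {a : ZMod (p ^ n) // r1 a = 1} *
          (p ^ n * (Nat.card {c : ZMod (p ^ m) // (p ^ n) • c = 0} *
            Nat.card {d : ZMod (p ^ m) // r2 d = 1})) * (p * (p ^ (m - n) * p))
        = (Nat.card {a : ZMod (p ^ n) // r1 a = 1} * p) *
          ((Nat.card {c : ZMod (p ^ m) // (p ^ n) • c = 0} * p ^ (m - n)) *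
           ((Nat.card {d : ZMod (p ^ m) // r2 d = 1} * p) * p ^ n)) := by ring
      _ = p ^ n * (p ^ m * (p ^ m * p ^ n)) := by rw [c1, c2, c3]
      _ = p ^ (3 * n + m - 2) * (p * (p ^ (m - n) * p)) := by
          have hx : p * (p ^ (m - n) * p) = p ^ (m - n + 2) := by ring
          rw [hx, ← pow_add, ← pow_add, ← pow_add, ← pow_add]
          congr 1
          omega
  have hNp : IsPGroup p N := IsPGroup.of_card hcardN
  have hNnormal : N.Normal := by rw [hNdef]; exact MonoidHom.normal_ker Φ
  have hidx : N.index ∣ (p - 1) * (p - 1) := by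
    rw [hNdef, Subgroup.index_ker]
    have h1 : Nat.card Φ.range ∣ Nat.card ((ZMod p × ZMod p)ˣ) :=
      Subgroup.card_subgroup_dvd_card _
    have h2 : Nat.card ((ZMod p × ZMod p)ˣ) = (p - 1) * (p - 1) := by
      rw [Nat.card_congr MulEquiv.prodUnits.toEquiv, Nat.card_prod]
      have h3 : Nat.card (ZMod p)ˣ = p - 1 := by
        rw [Nat.card_eq_fintype_card, ZMod.card_units_eq_totient, Nat.totient_prime hp]
      rw [h3]
    rwa [h2] at h1
  have hpidx : ¬ p ∣ N.index := by
    intro hdvd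
    have h2 := hdvd.trans hidx
    have h3 := hp.two_le
    rcases (Nat.Prime.dvd_mul hp).mp h2 with h | h <;>
      exact absurd (Nat.le_of_dvd (by omega) h) (by omega)
  have key : ∀ Q : Subgroup (AddAut (Gp p n m)), IsPGroup p Q → Q ≤ N := by
    intro Q hQ
    have hmap : IsPGroup p (Q.map (QuotientGroup.mk' N)) := hQ.map _
    obtain ⟨k, hk⟩ := IsPGroup.iff_card.mp hmap
    have hdvd : Nat.card (Q.map (QuotientGroup.mk' N)) ∣ Nat.card (AddAut (Gp p n m) ⧸ N) :=
      Subgroup.card_subgroup_dvd_card _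
    rw [hk, ← Subgroup.index_eq_card] at hdvd
    have hk0 : k = 0 := by
      by_contra hk0
      exact hpidx ((dvd_pow_self p hk0).trans hdvd)
    rw [hk0, pow_zero] at hk
    have hbot : Q.map (QuotientGroup.mk' N) = ⊥ := Subgroup.card_eq_one.mp hk
    rwa [Subgroup.map_eq_bot_iff, QuotientGroup.ker_mk'] at hbot
  have hsyl : ∀ P : Sylow p (AddAut (Gp p n m)), (P : Subgroup (AddAut (Gp p n m))) = N :=
    fun P => (P.3 hNp (key P P.2)).symm
  constructor
  · intro P Q
    exact Sylow.ext ((hsyl P).trans (hsyl Q).symm)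
  · intro P
    have h := hsyl P
    refine ⟨by rw [h]; exact hNnormal, ?_⟩
    rw [h]
    exact hcardN
end

section
/- Let p ≥ 5 be a prime and n ≥ 2 an integer. Let A be a 2×2 matrix over ℤ/pⁿ whose entrywise reduction modulo p equals the matrix [[1,1],[0,1]]. Then the entrywise reduction of A^p modulo p² equals [[1,p],[0,1]]; in particular A^p is not the identity matrix, so A does not have order p. -/
private lemma zmod_lift (p : ℕ) (hp1 : 1 < p) (x : ZMod (p ^ 2))
    (hx : ZMod.castHom (dvd_pow_self p (by omega : 2 ≠ 0)) (ZMod p) x = 0) :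
    ∃ a : ZMod (p ^ 2), x = (p : ZMod (p ^ 2)) * a := by
  have hp2 : NeZero (p ^ 2) := ⟨by positivity⟩
  have hpn : NeZero p := ⟨by omega⟩
  have h1 : ((x.val : ℕ) : ZMod p) = 0 := by
    rw [ZMod.natCast_val, ← ZMod.castHom_apply (h := dvd_pow_self p (by omega : 2 ≠ 0)), hx]
  rw [ZMod.natCast_eq_zero_iff] at h1
  obtain ⟨t, ht⟩ := h1
  refine ⟨(t : ZMod (p ^ 2)), ?_⟩
  have : ((x.val : ℕ) : ZMod (p ^ 2)) = x := by
    rw [ZMod.natCast_val, ZMod.cast_id]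
  rw [← this, ht]
  push_cast
  ring

private lemma key_pow (p : ℕ) (hp : p.Prime) (hp5 : 5 ≤ p)
    (B : Matrix (Fin 2) (Fin 2) (ZMod (p ^ 2)))
    (hB : B.map (ZMod.castHom (dvd_pow_self p (by omega : 2 ≠ 0)) (ZMod p)) =
      !![1, 1; 0, 1]) :
    B ^ p = !![1, (p : ZMod (p ^ 2)); 0, 1] := by
  have hpp : (p : ZMod (p ^ 2)) * (p : ZMod (p ^ 2)) = 0 := by
    have : ((p ^ 2 : ℕ) : ZMod (p ^ 2)) = 0 := ZMod.natCast_self _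
    push_cast at this
    linear_combination this
  -- extract entries
  have hlift : ∀ (i j : Fin 2) (y : ZMod (p ^ 2)),
      ZMod.castHom (dvd_pow_self p (by omega : 2 ≠ 0)) (ZMod p) y = (!![(1:ZMod p), 1; 0, 1]) i j →
      ∃ a : ZMod (p ^ 2), B i j = y + (p : ZMod (p ^ 2)) * a := by
    intro i j y hy
    have hmem : ZMod.castHom (dvd_pow_self p (by omega : 2 ≠ 0)) (ZMod p) (B i j) =
        (!![(1:ZMod p), 1; 0, 1]) i j := by
      rw [← hB, Matrix.map_apply]
    have h0 : ZMod.castHom (dvd_pow_self p (by omega : 2 ≠ 0)) (ZMod p) (B i j - y) = 0 := by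
      rw [map_sub, hmem, hy]; ring
    obtain ⟨a, ha⟩ := zmod_lift p hp.one_lt _ h0
    exact ⟨a, by linear_combination ha⟩
  obtain ⟨a, ha⟩ := hlift 0 0 1 (by rw [map_one]; norm_num)
  obtain ⟨b, hb⟩ := hlift 0 1 1 (by rw [map_one]; norm_num)
  obtain ⟨c, hc⟩ := hlift 1 0 0 (by rw [map_zero]; norm_num)
  obtain ⟨d, hd⟩ := hlift 1 1 1 (by rw [map_one]; norm_num)
  have hBeq : B = !![1 + (p:ZMod (p ^ 2)) * a, 1 + (p:ZMod (p ^ 2)) * b; (p:ZMod (p ^ 2)) * c, 1 + (p:ZMod (p ^ 2)) * d] := by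
    ext i j
    fin_cases i <;> fin_cases j <;> simp [ha, hb, hc, hd]
  -- closed formula by induction
  have key : ∀ k : ℕ, B ^ k =
      !![1 + (p:ZMod (p ^ 2)) * ((k : ZMod (p ^ 2)) * a + (k.choose 2 : ZMod (p ^ 2)) * c),
         (k : ZMod (p ^ 2)) + (p:ZMod (p ^ 2)) * ((k : ZMod (p ^ 2)) * b + (k.choose 2 : ZMod (p ^ 2)) * (a + d) + (k.choose 3 : ZMod (p ^ 2)) * c);
         (p:ZMod (p ^ 2)) * ((k : ZMod (p ^ 2)) * c),
         1 + (p:ZMod (p ^ 2)) * ((k : ZMod (p ^ 2)) * d + (k.choose 2 : ZMod (p ^ 2)) * c)] := by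
    intro k
    induction k with
    | zero => simp [Matrix.one_fin_two]
    | succ k ih =>
      rw [pow_succ B k]
      rw [ih]
      rw [hBeq]
      rw [Matrix.mul_fin_two]
      have h2 : ((k + 1).choose 2 : ZMod (p ^ 2)) = (k.choose 2 : ZMod (p ^ 2)) + (k : ZMod (p ^ 2)) := by
        rw [show (k+1).choose 2 = k.choose 1 + k.choose 2 from Nat.choose_succ_succ k 1]
        rw [Nat.choose_one_right]; push_cast; ring
      have h3 : ((k + 1).choose 3 : ZMod (p ^ 2)) = (k.choose 2 : ZMod (p ^ 2)) + (k.choose 3 : ZMod (p ^ 2)) := by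
        rw [Nat.choose_succ_succ k 2]; push_cast; ring
      ext i j
      fin_cases i <;> fin_cases j <;>
        simp only [Fin.zero_eta, Fin.mk_one, Matrix.of_apply, Matrix.cons_val', Matrix.cons_val_zero, Matrix.cons_val_one,
          Matrix.head_cons, Matrix.head_fin_const, Matrix.empty_val',
          Matrix.cons_val_fin_one, Nat.cast_add, Nat.cast_one, h2, h3]
      · linear_combination (((k:ZMod (p ^ 2))*a + (k.choose 2:ZMod (p ^ 2))*c)*a +
          ((k:ZMod (p ^ 2))*b + (k.choose 2:ZMod (p ^ 2))*(a+d) + (k.choose 3:ZMod (p ^ 2))*c)*c) * hpp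
      · linear_combination (((k:ZMod (p ^ 2))*a + (k.choose 2:ZMod (p ^ 2))*c)*b +
          ((k:ZMod (p ^ 2))*b + (k.choose 2:ZMod (p ^ 2))*(a+d) + (k.choose 3:ZMod (p ^ 2))*c)*d) * hpp
      · linear_combination ((k:ZMod (p ^ 2))*c*a + ((k:ZMod (p ^ 2))*d + (k.choose 2:ZMod (p ^ 2))*c)*c) * hpp
      · linear_combination ((k:ZMod (p ^ 2))*c*b + ((k:ZMod (p ^ 2))*d + (k.choose 2:ZMod (p ^ 2))*c)*d) * hpp
  -- evaluate at k = p
  rw [key p]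
  have hc2 : (p : ZMod (p ^ 2)) * (p.choose 2 : ZMod (p ^ 2)) = 0 := by
    obtain ⟨m, hm⟩ := hp.dvd_choose_self (by omega : (2:ℕ) ≠ 0) (by omega)
    rw [hm]; push_cast; linear_combination (m : ZMod (p ^ 2)) * hpp
  have hc3 : (p : ZMod (p ^ 2)) * (p.choose 3 : ZMod (p ^ 2)) = 0 := by
    obtain ⟨m, hm⟩ := hp.dvd_choose_self (by omega : (3:ℕ) ≠ 0) (by omega)
    rw [hm]; push_cast; linear_combination (m : ZMod (p ^ 2)) * hpp
  ext i j
  fin_cases i <;> fin_cases j <;>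
    simp only [Fin.zero_eta, Fin.mk_one, Matrix.of_apply, Matrix.cons_val', Matrix.cons_val_zero, Matrix.cons_val_one,
      Matrix.head_cons, Matrix.head_fin_const, Matrix.empty_val', Matrix.cons_val_fin_one]
  · linear_combination a * hpp + c * hc2
  · linear_combination b * hpp + (a + d) * hc2 + c * hc3
  · linear_combination c * hpp
  · linear_combination d * hpp + c * hc2

/-- Let `p ≥ 5` be prime and `n ≥ 2`. If `A` is a `2×2` matrix over
`ℤ/pⁿ` whose entrywise reduction mod `p` is `[[1,1],[0,1]]`, then the entrywise
reduction of `A^p` mod `p²` is `[[1,p],[0,1]]`; in particular `A^p ≠ 1`, so `A`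
does not have order `p`. -/
theorem pow_p_of_reduction_unipotent (p n : ℕ) (hp : p.Prime) (hp5 : 5 ≤ p)
    (hn : 2 ≤ n) (A : Matrix (Fin 2) (Fin 2) (ZMod (p ^ n)))
    (hA : A.map (ZMod.castHom (dvd_pow_self p (by omega : n ≠ 0)) (ZMod p)) =
      !![1, 1; 0, 1]) :
    (A ^ p).map (ZMod.castHom (pow_dvd_pow p hn) (ZMod (p ^ 2))) =
        !![1, (p : ZMod (p ^ 2)); 0, 1] ∧
      A ^ p ≠ 1 ∧ orderOf A ≠ p := by
  set f := ZMod.castHom (pow_dvd_pow p hn) (ZMod (p ^ 2)) with hf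
  have hmap : (A ^ p).map f = (A.map f) ^ p := by
    have := map_pow (f.mapMatrix) A p
    simpa [RingHom.mapMatrix_apply] using this
  have hBred : (A.map f).map (ZMod.castHom (dvd_pow_self p (by omega : 2 ≠ 0)) (ZMod p)) =
      !![1, 1; 0, 1] := by
    rw [← hA]
    ext i j
    simp only [Matrix.map_apply, hf]
    rw [← RingHom.comp_apply, ZMod.castHom_comp]
  have hmain : (A ^ p).map f = !![1, (p : ZMod (p ^ 2)); 0, 1] := by
    rw [hmap]
    exact key_pow p hp hp5 (A.map f) hBred
  have hpne : (p : ZMod (p ^ 2)) ≠ 0 := by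
    intro h
    rw [ZMod.natCast_eq_zero_iff] at h
    have := Nat.le_of_dvd (by omega) h
    nlinarith [hp.two_le]
  have hne : A ^ p ≠ 1 := by
    intro h
    rw [h] at hmain
    have h01 := congrFun (congrFun hmain 0) 1
    simp [Matrix.map_apply, Matrix.one_apply] at h01
    exact hpne h01.symm
  refine ⟨hmain, hne, ?_⟩
  intro h
  have h1 := pow_orderOf_eq_one A
  rw [h] at h1
  exact hne h1
end

section
/- Let p be an odd prime, r ≥ 3 an integer, and G a group of order p^r generated by elements a, b, c satisfying a^p = b^p = c^{p^{r-2}} = 1, [a,b] = c^{p^{r-3}}, and c ∈ Z(G). Then the center of G is exactly the cyclic subgroup generated by c, and c has order p^{r-2}. -/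
private lemma sub_eq_of_le_of_card_le {G : Type*} [Group G] {H K : Subgroup G} [Finite G]
    (h : H ≤ K) (hc : Nat.card K ≤ Nat.card H) : H = K := by
  apply SetLike.coe_injective
  exact (Set.eq_of_subset_of_ncard_le h
    (by rwa [← Nat.card_coe_set_eq, ← Nat.card_coe_set_eq]) (Set.toFinite _))

/-- Let `p` be an odd prime, `r ≥ 3`, and `G` a group of order `p^r`
generated by `a, b, c` with `a^p = b^p = c^(p^(r-2)) = 1`, `[a,b] = c^(p^(r-3))`
(where `[x,y] = x⁻¹y⁻¹xy`) and `c` central. Then `Z(G) = ⟨c⟩` and `c` has order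
`p^(r-2)`. -/
theorem center_of_Cpr (p r : ℕ) (hp : p.Prime) (hodd : Odd p) (hr : 3 ≤ r)
    (G : Type) [Group G] (a b c : G)
    (hcard : Nat.card G = p ^ r)
    (hgen : Subgroup.closure {a, b, c} = ⊤)
    (ha : a ^ p = 1) (hb : b ^ p = 1) (hc : c ^ p ^ (r - 2) = 1)
    (hab : a⁻¹ * b⁻¹ * a * b = c ^ p ^ (r - 3))
    (hcz : c ∈ Subgroup.center G) :
    Subgroup.center G = Subgroup.zpowers c ∧ orderOf c = p ^ (r - 2) := by
  have hp1 : 1 < p := hp.one_lt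
  haveI : NeZero p := ⟨hp.pos.ne'⟩
  haveI hGfin : Finite G := Nat.finite_of_card_ne_zero (by
    rw [hcard]; exact (pow_pos hp.pos r).ne' )
  set N : Subgroup G := Subgroup.zpowers c with hN
  have hNle : N ≤ Subgroup.center G := Subgroup.zpowers_le.mpr hcz
  haveI hNnormal : N.Normal := by
    constructor
    intro n hn g
    have h1 : g * n = n * g := Subgroup.mem_center_iff.mp (hNle hn) g
    rw [h1, mul_assoc, mul_inv_cancel, mul_one]
    exact hn
  set π : G →* G ⧸ N := QuotientGroup.mk' N with hπ
  have hπsurj : Function.Surjective π := QuotientGroup.mk'_surjective N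
  have hπc : π c = 1 := (QuotientGroup.eq_one_iff c).mpr (Subgroup.mem_zpowers c)
  set A : G ⧸ N := π a with hA
  set B : G ⧸ N := π b with hB
  have hAp : A ^ p = 1 := by rw [hA, ← map_pow, ha, map_one]
  have hBp : B ^ p = 1 := by rw [hB, ← map_pow, hb, map_one]
  have hcomm1 : A⁻¹ * B⁻¹ * A * B = 1 := by
    have : π (a⁻¹ * b⁻¹ * a * b) = 1 := by
      rw [hab]
      exact (QuotientGroup.eq_one_iff _).mpr
        (Subgroup.pow_mem N (Subgroup.mem_zpowers c) (p ^ (r - 3)))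
    simpa [map_mul, map_inv] using this
  have hABcomm : Commute A B := by
    have h1 : B * A * (A⁻¹ * B⁻¹ * A * B) = B * A * 1 := by rw [hcomm1]
    unfold Commute SemiconjBy
    simp only [mul_one] at h1
    rw [← h1]; group
  -- every element of the quotient is A^i * B^j
  have hgenQ : ∀ q : G ⧸ N, ∃ i j : ℤ, A ^ i * B ^ j = q := by
    intro q
    obtain ⟨g, rfl⟩ := hπsurj q
    have hg : g ∈ Subgroup.closure ({a, b, c} : Set G) := by rw [hgen]; trivial
    induction hg using Subgroup.closure_induction with
    | mem x hx =>
      rcases hx with rfl | rfl | rfl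
      · exact ⟨1, 0, by simp [hA]⟩
      · exact ⟨0, 1, by simp [hB]⟩
      · exact ⟨0, 0, by simp [hπc]⟩
    | one => exact ⟨0, 0, by simp⟩
    | mul x y hx hy ihx ihy =>
      obtain ⟨i, j, hij⟩ := ihx
      obtain ⟨k, l, hkl⟩ := ihy
      refine ⟨i + k, j + l, ?_⟩
      have hswap : B ^ j * A ^ k = A ^ k * B ^ j := (hABcomm.symm.zpow_zpow j k).eq
      rw [map_mul, ← hij, ← hkl, zpow_add, zpow_add]
      calc A ^ i * A ^ k * (B ^ j * B ^ l)
          = A ^ i * (A ^ k * B ^ j) * B ^ l := by group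
        _ = A ^ i * (B ^ j * A ^ k) * B ^ l := by rw [hswap]
        _ = A ^ i * B ^ j * (A ^ k * B ^ l) := by group
    | inv x hx ihx =>
      obtain ⟨i, j, hij⟩ := ihx
      refine ⟨-i, -j, ?_⟩
      have hswap : B ^ (-j) * A ^ (-i) = A ^ (-i) * B ^ (-j) :=
        (hABcomm.symm.zpow_zpow (-j) (-i)).eq
      rw [map_inv, ← hij, mul_inv_rev, ← zpow_neg, ← zpow_neg, hswap]
  -- reduce exponents mod p
  have hred : ∀ (X : G ⧸ N), X ^ p = 1 → ∀ i : ℤ, X ^ i = X ^ ((i : ZMod p).val) := by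
    intro X hX i
    set m : ℕ := ((i : ZMod p)).val with hm
    have hdvd : (p : ℤ) ∣ i - (m : ℤ) := by
      have h0 : ((i - (m : ℤ) : ℤ) : ZMod p) = 0 := by
        push_cast
        simp [hm, ZMod.natCast_val, ZMod.intCast_zmod_cast]
      exact (ZMod.intCast_zmod_eq_zero_iff_dvd _ p).mp h0
    obtain ⟨k, hk⟩ := hdvd
    have hi : i = (m : ℤ) + p * k := by linarith
    rw [hi, zpow_add, zpow_mul, zpow_natCast, zpow_natCast, hX, one_zpow, mul_one]
  -- bound the quotient card
  have hQcard : Nat.card (G ⧸ N) ≤ p ^ 2 := by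
    have hsurj : Function.Surjective
        (fun x : ZMod p × ZMod p => A ^ (x.1.val) * B ^ (x.2.val)) := by
      intro q
      obtain ⟨i, j, hij⟩ := hgenQ q
      refine ⟨((i : ZMod p), (j : ZMod p)), ?_⟩
      simp only
      rw [← hred A hAp i, ← hred B hBp j]
      exact hij
    have := Nat.card_le_card_of_surjective _ hsurj
    simpa [Nat.card_prod, Nat.card_zmod, sq] using this
  have hNcard : Nat.card N = orderOf c := Nat.card_zpowers c
  have hcardeq : p ^ r = Nat.card (G ⧸ N) * orderOf c := by
    rw [← hNcard, ← hcard]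
    exact Subgroup.card_eq_card_quotient_mul_card_subgroup N
  have hordle : orderOf c ≤ p ^ (r - 2) :=
    Nat.le_of_dvd (pow_pos hp.pos _) (orderOf_dvd_of_pow_eq_one hc)
  have hordge : p ^ (r - 2) ≤ orderOf c := by
    have h2 : p ^ 2 * p ^ (r - 2) = p ^ r := by
      rw [← pow_add]; congr 1; omega
    have : p ^ 2 * p ^ (r - 2) ≤ p ^ 2 * orderOf c := by
      rw [h2, hcardeq]
      exact Nat.mul_le_mul_right _ hQcard
    exact Nat.le_of_mul_le_mul_left this (pow_pos hp.pos _)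
  have horder : orderOf c = p ^ (r - 2) := le_antisymm hordle hordge
  refine ⟨?_, horder⟩
  -- center = zpowers c
  by_contra hne
  have hzcard : Nat.card N = p ^ (r - 2) := by rw [hNcard, horder]
  have hlt : ¬ Nat.card (Subgroup.center G) ≤ Nat.card N := fun hle =>
    hne (sub_eq_of_le_of_card_le hNle hle).symm
  push_neg at hlt
  obtain ⟨k, hkr, hk⟩ := (Nat.dvd_prime_pow hp).mp
    (hcard ▸ Subgroup.card_subgroup_dvd_card (Subgroup.center G))
  have hdvd2 : p ^ (r - 2) ∣ p ^ k := by
    rw [← hk, ← hzcard]; exact Subgroup.card_dvd_of_le hNle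
  have hkge : r - 2 ≤ k := (Nat.pow_dvd_pow_iff_le_right hp1).mp hdvd2
  have hkgt : r - 2 < k := by
    rcases lt_or_eq_of_le hkge with h | h
    · exact h
    · exact absurd (le_of_eq (by rw [hzcard, hk, ← h])) (not_le.mpr hlt)
  -- index of center divides p
  have hindex : (Subgroup.center G).index = p ^ (r - k) := by
    have h1 : Nat.card (Subgroup.center G) * (Subgroup.center G).index = p ^ r := by
      rw [Subgroup.card_mul_index, hcard]
    rw [hk] at h1
    have h2 : p ^ k * p ^ (r - k) = p ^ r := by rw [← pow_add]; congr 1; omega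
    have hpk : 0 < p ^ k := pow_pos hp.pos _
    exact Nat.eq_of_mul_eq_mul_left hpk (h1.trans h2.symm)
  have hrk : r - k ≤ 1 := by omega
  haveI : IsCyclic (G ⧸ Subgroup.center G) := by
    have hqc : Nat.card (G ⧸ Subgroup.center G) = p ^ (r - k) := by
      rw [← Subgroup.index_eq_card, hindex]
    interval_cases h : r - k
    · rw [pow_zero] at hqc
      haveI : Subsingleton (G ⧸ Subgroup.center G) :=
        Nat.card_eq_one_iff_unique.mp hqc |>.1
      infer_instance
    · rw [pow_one] at hqc
      haveI : Fact p.Prime := ⟨hp⟩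
      exact isCyclic_of_prime_card hqc
  have hcommG : ∀ x y : G, x * y = y * x :=
    commutative_of_cyclic_center_quotient (QuotientGroup.mk' (Subgroup.center G))
      (by rw [QuotientGroup.ker_mk'])
  have hab1 : a⁻¹ * b⁻¹ * a * b = 1 := by
    rw [mul_assoc, hcommG a b, ← mul_assoc, mul_assoc a⁻¹ b⁻¹ b]
    group
  rw [hab1] at hab
  have : orderOf c ∣ p ^ (r - 3) := orderOf_dvd_of_pow_eq_one hab.symm
  rw [horder] at this
  have := (Nat.pow_dvd_pow_iff_le_right hp1).mp this
  omega
end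

section
/- Let p be an odd prime, r ≥ 4 an integer, and G a group of order p^r generated by elements a, b, c satisfying a^p = b^p = c^{p^{r-2}} = 1, [a,b] = c^{p^{r-3}}, and c ∈ Z(G). If H is a p-centric subgroup of G (i.e. the centralizer of H in G is contained in H), then either H = G or H is isomorphic to ℤ/p × ℤ/p^{r-2}. -/
/-- Let `p` be an odd prime, `r ≥ 4`, and `G` a group of order `p^r`
generated by `a, b, c` with `a^p = b^p = c^(p^(r-2)) = 1`, `[a,b] = c^(p^(r-3))`
(where `[x,y] = x⁻¹y⁻¹xy`) and `c` central. If `H ≤ G` is `p`-centric (its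
centralizer in `G` is contained in `H`), then `H = G` or
`H ≅ ℤ/p × ℤ/p^(r-2)`. -/
theorem pCentric_Cpr (p r : ℕ) (hp : p.Prime) (hodd : Odd p) (hr : 4 ≤ r)
    (G : Type) [Group G] (a b c : G)
    (hcard : Nat.card G = p ^ r)
    (hgen : Subgroup.closure {a, b, c} = ⊤)
    (ha : a ^ p = 1) (hb : b ^ p = 1) (hc : c ^ p ^ (r - 2) = 1)
    (hab : a⁻¹ * b⁻¹ * a * b = c ^ p ^ (r - 3))
    (hcz : c ∈ Subgroup.center G)
    (H : Subgroup G)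
    (hcen : Subgroup.centralizer (H : Set G) ≤ H) :
    H = ⊤ ∨ Nonempty (H ≃* Multiplicative (ZMod p × ZMod (p ^ (r - 2)))) := by
  by_cases hHtop : H = ⊤
  · exact Or.inl hHtop
  right
  -- notation
  set q : ℕ := p ^ (r - 2) with hq_def
  set w : ℤ := ((p : ℤ)) ^ (r - 3) with hw_def
  have hp1 : 1 < p := hp.one_lt
  have hppos : 0 < p := hp.pos
  have hqpos : 0 < q := pow_pos hppos _
  haveI : NeZero p := ⟨hp.ne_zero⟩
  haveI : NeZero q := ⟨hqpos.ne'⟩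
  have hfin : Finite G := Nat.finite_of_card_ne_zero (by rw [hcard]; positivity)
  -- c powers are central
  have hcc : ∀ (k : ℤ) (g : G), g * c ^ k = c ^ k * g := fun k g =>
    Subgroup.mem_center_iff.mp (Subgroup.zpow_mem _ hcz k) g
  have hcw : c ^ w = c ^ (p ^ (r - 3)) := by
    rw [show w = ((p ^ (r - 3) : ℕ) : ℤ) by push_cast [hw_def]; ring, zpow_natCast]
  have hab2 : a * b = b * a * c ^ w := by rw [hcw, ← hab]; group
  -- oriented simp lemmas: move c-powers to the right
  have hmv : ∀ (k : ℤ) (g x : G), c ^ k * (g * x) = g * (c ^ k * x) := by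
    intro k g x; rw [← mul_assoc, ← hcc, mul_assoc]
  have hca : ∀ (k : ℤ) (x : G), c ^ k * (a * x) = a * (c ^ k * x) := fun k x => hmv k a x
  have hca' : ∀ (k : ℤ) (x : G), c ^ k * (a⁻¹ * x) = a⁻¹ * (c ^ k * x) := fun k x => hmv k a⁻¹ x
  have hcb : ∀ (k : ℤ) (x : G), c ^ k * (b * x) = b * (c ^ k * x) := fun k x => hmv k b x
  have hcaz : ∀ (k i : ℤ) (x : G), c ^ k * (a ^ i * x) = a ^ i * (c ^ k * x) := fun k i x => hmv k (a ^ i) x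
  have hcbz : ∀ (k i : ℤ) (x : G), c ^ k * (b ^ i * x) = b ^ i * (c ^ k * x) := fun k i x => hmv k (b ^ i) x
  have hca2 : ∀ (k : ℤ), c ^ k * a = a * c ^ k := fun k => (hcc k a).symm
  have hca2' : ∀ (k : ℤ), c ^ k * a⁻¹ = a⁻¹ * c ^ k := fun k => (hcc k a⁻¹).symm
  have hcb2 : ∀ (k : ℤ), c ^ k * b = b * c ^ k := fun k => (hcc k b).symm
  have hcaz2 : ∀ (k i : ℤ), c ^ k * a ^ i = a ^ i * c ^ k := fun k i => (hcc k (a ^ i)).symm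
  have hcbz2 : ∀ (k i : ℤ), c ^ k * b ^ i = b ^ i * c ^ k := fun k i => (hcc k (b ^ i)).symm
  -- conjugation of b by powers of a
  have conj : ∀ i : ℤ, a ^ i * b * (a ^ i)⁻¹ = b * c ^ (w * i) := by
    intro i
    induction i using Int.induction_on with
    | zero => simp
    | succ i ih =>
      have e : a ^ ((i:ℤ)+1) * b * (a ^ ((i:ℤ)+1))⁻¹ = a * (a ^ (i:ℤ) * b * (a ^ (i:ℤ))⁻¹) * a⁻¹ := by
        rw [zpow_add_one]; group
      rw [e, ih, ← mul_assoc, hab2]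
      simp only [mul_assoc, hca, hca', hcb, hca2, hca2', hcb2, ← zpow_add,
        mul_inv_cancel_left, inv_mul_cancel_left, mul_inv_cancel, inv_mul_cancel, mul_one]
      ring_nf
    | pred i ih =>
      have e : a ^ (-(i:ℤ)-1) * b * (a ^ (-(i:ℤ)-1))⁻¹ = a⁻¹ * (a ^ (-(i:ℤ)) * b * (a ^ (-(i:ℤ)))⁻¹) * a := by
        rw [sub_eq_add_neg, zpow_add, zpow_neg_one]; group
      have hba : b * a = a * b * c ^ (-w) := by
        rw [hab2]
        simp only [mul_assoc, ← zpow_add, add_neg_cancel, zpow_zero, mul_one]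
      have hab3 : a⁻¹ * b = b * (c ^ (-w) * a⁻¹) := by
        have e2 : a⁻¹ * (b * a) * a⁻¹ = a⁻¹ * b := by group
        rw [← e2, hba]
        simp only [mul_assoc, inv_mul_cancel_left, hca, hca', hcb, hca2, hca2', hcb2]
      rw [e, ih, ← mul_assoc, hab3]
      simp only [mul_assoc, hca, hca', hcb, hca2, hca2', hcb2, ← zpow_add,
        mul_inv_cancel_left, inv_mul_cancel_left, mul_inv_cancel, inv_mul_cancel, mul_one]
      ring_nf
  -- conjugation of b^j by a^i
  have conj2 : ∀ i j : ℤ, a ^ i * b ^ j * (a ^ i)⁻¹ = b ^ j * c ^ (w * i * j) := by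
    intro i j
    calc a ^ i * b ^ j * (a ^ i)⁻¹ = (a ^ i * b * (a ^ i)⁻¹) ^ j := (conj_zpow).symm
      _ = (b * c ^ (w * i)) ^ j := by rw [conj]
      _ = b ^ j * (c ^ (w * i)) ^ j := Commute.mul_zpow (hcc (w * i) b) j
      _ = b ^ j * c ^ (w * i * j) := by rw [← zpow_mul]
  -- swap a-powers past b-powers
  have swap : ∀ i j : ℤ, b ^ j * a ^ i = a ^ i * (b ^ j * c ^ (-(w * i * j))) := by
    intro i j
    have h2 : a ^ i * b ^ j = b ^ j * c ^ (w * i * j) * a ^ i := by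
      rw [← conj2 i j]; group
    have e2 : a ^ i * ((a ^ i)⁻¹ * (b ^ j * a ^ i)) = b ^ j * a ^ i := by group
    rw [← e2]
    have e3 : (a ^ i)⁻¹ * (b ^ j * a ^ i) = b ^ j * c ^ (-(w * i * j)) := by
      have e4 : (a ^ i)⁻¹ * ((a ^ i * b ^ j) * c ^ (-(w * i * j))) = (a ^ i)⁻¹ * (b ^ j * a ^ i) := by
        rw [show a ^ i * b ^ j = b ^ j * c ^ (w * i * j) * a ^ i from h2]
        simp only [mul_assoc, hcaz, hcbz, hcaz2, hcbz2, ← zpow_add, add_neg_cancel,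
          zpow_zero, mul_one]
      rw [← e4]
      simp only [mul_assoc, inv_mul_cancel_left]
    rw [e3]
  -- multiplication of normal forms
  have mulform : ∀ i j k i' j' k' : ℤ, (a ^ i * b ^ j * c ^ k) * (a ^ i' * b ^ j' * c ^ k')
      = a ^ (i + i') * b ^ (j + j') * c ^ (k + k' + -(w * i' * j)) := by
    intro i j k i' j' k'
    have e1 : (a ^ i * b ^ j * c ^ k) * (a ^ i' * b ^ j' * c ^ k')
        = a ^ i * ((b ^ j * a ^ i') * (b ^ j' * (c ^ k * c ^ k'))) := by
      simp only [mul_assoc, hcaz, hcbz, hcaz2, hcbz2]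
    have hcol : ∀ (g : G) (m n : ℤ) (x : G), g ^ m * (g ^ n * x) = g ^ (m + n) * x := by
      intro g m n x; rw [← mul_assoc, ← zpow_add]
    rw [e1, swap]
    simp only [mul_assoc, hcaz, hcbz, hcaz2, hcbz2, hcol, ← zpow_add]
    ring_nf
  -- the set of normal forms is a subgroup, hence everything
  have hT : ∀ g : G, ∃ i j k : ℤ, g = a ^ i * b ^ j * c ^ k := by
    let T : Subgroup G :=
      { carrier := {g | ∃ i j k : ℤ, g = a ^ i * b ^ j * c ^ k}
        one_mem' := ⟨0, 0, 0, by simp⟩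
        mul_mem' := by
          rintro x y ⟨i, j, k, rfl⟩ ⟨i', j', k', rfl⟩
          exact ⟨i + i', j + j', k + k' + -(w * i' * j), mulform i j k i' j' k'⟩
        inv_mem' := by
          rintro x ⟨i, j, k, rfl⟩
          refine ⟨-i, -j, -k + -(w * i * j), ?_⟩
          apply inv_eq_of_mul_eq_one_right
          rw [mulform]
          simp only [add_neg_cancel, zpow_zero, one_mul, mul_one]
          rw [show k + (-k + -(w * i * j)) + -(w * -i * j) = 0 by ring, zpow_zero] }
    have hle : (⊤ : Subgroup G) ≤ T := by
      rw [← hgen]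
      rw [Subgroup.closure_le]
      rintro x (rfl | rfl | rfl)
      · exact ⟨1, 0, 0, by simp⟩
      · exact ⟨0, 1, 0, by simp⟩
      · exact ⟨0, 0, 1, by simp⟩
    exact fun g => hle (Subgroup.mem_top g)
  -- reduction of integer powers modulo the order
  have zpow_mod : ∀ (g : G) (n : ℕ), 0 < n → g ^ n = 1 → ∀ i : ℤ, g ^ i = g ^ ((i % (n : ℤ)).toNat) := by
    intro g n hn hg i
    have h1 : g ^ i = g ^ ((n : ℤ) * (i / (n : ℤ)) + i % (n : ℤ)) := by
      rw [Int.mul_ediv_add_emod i (n : ℤ)]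
    rw [h1, zpow_add, zpow_mul, zpow_natCast, hg, one_zpow, one_mul,
      ← zpow_natCast, Int.toNat_of_nonneg (Int.emod_nonneg i (by exact_mod_cast hn.ne'))]
  have powmod : ∀ (g : G) (n : ℕ), g ^ n = 1 → ∀ m : ℕ, g ^ (m % n) = g ^ m := by
    intro g n hg m
    conv_rhs => rw [← Nat.div_add_mod m n]
    rw [pow_add, pow_mul, hg, one_pow, one_mul]
  -- order of c is exactly q
  have hdq : orderOf c = q := by
    have hdle : orderOf c ≤ q := orderOf_le_of_pow_eq_one hqpos hc
    have hdpos : 0 < orderOf c := orderOf_pos c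
    haveI : NeZero (orderOf c) := ⟨hdpos.ne'⟩
    have hsurj : Function.Surjective
        (fun x : ZMod p × ZMod p × ZMod (orderOf c) =>
          a ^ (x.1.val) * b ^ (x.2.1.val) * c ^ (x.2.2.val) : _ → G) := by
      intro g
      obtain ⟨i, j, k, rfl⟩ := hT g
      refine ⟨((i : ZMod p), (j : ZMod p), (k : ZMod (orderOf c))), ?_⟩
      simp only
      have hv : ∀ (n : ℕ) (_ : 0 < n) (i : ℤ), (ZMod.val ((i : ZMod n))) = (i % (n : ℤ)).toNat := by
        intro n hn i
        haveI : NeZero n := ⟨hn.ne'⟩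
        have := ZMod.val_intCast (n := n) i
        exact_mod_cast congrArg Int.toNat this
      rw [hv p hppos i, hv p hppos j, hv (orderOf c) hdpos k,
        ← zpow_mod a p hppos ha i, ← zpow_mod b p hppos hb j,
        ← zpow_mod c (orderOf c) hdpos (pow_orderOf_eq_one c) k]
    have hle2 : p ^ r ≤ p * (p * orderOf c) := by
      calc p ^ r = Nat.card G := hcard.symm
        _ ≤ Nat.card (ZMod p × ZMod p × ZMod (orderOf c)) :=
          Nat.card_le_card_of_surjective _ hsurj
        _ = p * (p * orderOf c) := by
          simp [Nat.card_prod, Nat.card_zmod]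
    have hqle : q ≤ orderOf c := by
      have h1 : p ^ 2 * p ^ (r - 2) ≤ p ^ 2 * orderOf c := by
        calc p ^ 2 * p ^ (r - 2) = p ^ r := by
              rw [← pow_add]; congr 1; omega
          _ ≤ p * (p * orderOf c) := hle2
          _ = p ^ 2 * orderOf c := by ring
      exact Nat.le_of_mul_le_mul_left h1 (by positivity)
    omega
  -- power formula in a group of class two
  have powp : ∀ (i j : ℤ) (n : ℕ), (a ^ i * b ^ j) ^ n
      = a ^ (i * n) * b ^ (j * n) * c ^ (-(w * i * j * (n.choose 2 : ℤ))) := by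
    intro i j n
    induction n with
    | zero => simp
    | succ n ih =>
      rw [pow_succ, ih]
      rw [show a ^ i * b ^ j = a ^ i * b ^ j * c ^ (0:ℤ) by simp]
      rw [mulform]
      have hch : (((n+1).choose 2 : ℕ) : ℤ) = ((n.choose 2 : ℕ) : ℤ) + (n : ℤ) := by
        rw [Nat.choose_succ_succ]
        push_cast [Nat.choose_one_right]
        ring
      rw [show i * (n:ℤ) + i = i * ((n:ℤ) + 1) by ring,
        show j * (n:ℤ) + j = j * ((n:ℤ) + 1) by ring,
        show -(w * i * j * ((n.choose 2 : ℕ) : ℤ)) + 0 + -(w * i * (j * (n:ℤ)))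
            = -(w * i * j * (((n.choose 2 : ℕ) : ℤ) + (n:ℤ))) by ring,
        ← hch]
      push_cast
      ring_nf
  -- c is in H
  have hcH : c ∈ H := hcen (Subgroup.mem_centralizer_iff.mpr
    (fun h _ => Subgroup.mem_center_iff.mp hcz h))
  -- H is not contained in the cyclic subgroup generated by c
  by_cases hsub : H ≤ Subgroup.zpowers c
  · exfalso
    apply hHtop
    rw [← top_le_iff]
    intro g _
    apply hcen
    rw [Subgroup.mem_centralizer_iff]
    intro h hh
    obtain ⟨m, hm⟩ := hsub hh
    rw [← hm, ← hcc]
  obtain ⟨x, hxH, hxc⟩ := SetLike.not_le_iff_exists.mp hsub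
  obtain ⟨i, j, k, rfl⟩ := hT x
  set y : G := a ^ i * b ^ j with hy_def
  have hyH : y ∈ H := by
    have h1 : (a ^ i * b ^ j * c ^ k) * (c ^ k)⁻¹ ∈ H :=
      mul_mem hxH (inv_mem (Subgroup.zpow_mem H hcH k))
    simpa [hy_def] using h1
  have hyc : y ∉ Subgroup.zpowers c := by
    intro hy
    apply hxc
    exact mul_mem hy (Subgroup.zpow_mem _ (Subgroup.mem_zpowers c) k)
  -- y has order dividing p
  have hyp : y ^ p = 1 := by
    obtain ⟨t, ht⟩ := hodd
    have hch2 : (p.choose 2 : ℤ) = (p : ℤ) * (t : ℤ) := by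
      have h1 : p - 1 = 2 * t := by omega
      have h2 : p.choose 2 = p * t := by
        rw [Nat.choose_two_right, h1, show p * (2 * t) = 2 * (p * t) by ring,
          Nat.mul_div_cancel_left _ (by norm_num)]
      exact_mod_cast h2
    rw [hy_def, powp, hch2]
    have e1 : a ^ (i * (p:ℤ)) = 1 := by
      rw [mul_comm, zpow_mul, zpow_natCast, ha, one_zpow]
    have e2 : b ^ (j * (p:ℤ)) = 1 := by
      rw [mul_comm, zpow_mul, zpow_natCast, hb, one_zpow]
    have e3 : c ^ (-(w * i * j * ((p:ℤ) * (t:ℤ)))) = 1 := by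
      have hwp : w * (p:ℤ) = ((q:ℕ) : ℤ) := by
        rw [hw_def, hq_def]
        push_cast
        rw [← pow_succ]
        congr 1
        omega
      rw [show -(w * i * j * ((p:ℤ) * (t:ℤ))) = (w * (p:ℤ)) * (-(i * j * t)) by ring,
        hwp, zpow_mul, zpow_natCast, hc, one_zpow]
    rw [e1, e2, e3, one_mul, one_mul]
  have hccn : ∀ (k : ℕ) (g : G), g * c ^ k = c ^ k * g := by
    intro k g
    have h1 := hcc (k : ℤ) g
    rwa [zpow_natCast] at h1
  -- the homomorphism from ZMod p × ZMod q
  let φ : Multiplicative (ZMod p × ZMod q) →* G :=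
    { toFun := fun m => y ^ ((Multiplicative.toAdd m).1.val) * c ^ ((Multiplicative.toAdd m).2.val)
      map_one' := by simp
      map_mul' := by
        intro m₁ m₂
        simp only [toAdd_mul, Prod.fst_add, Prod.snd_add]
        rw [ZMod.val_add, ZMod.val_add, powmod y p hyp, powmod c q hc, pow_add, pow_add]
        simp only [mul_assoc]
        congr 1
        rw [← mul_assoc, hccn ((Multiplicative.toAdd m₁).2.val)
          (y ^ ((Multiplicative.toAdd m₂).1.val)), mul_assoc] }
  have hφ : ∀ m, φ m = y ^ ((Multiplicative.toAdd m).1.val) * c ^ ((Multiplicative.toAdd m).2.val) :=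
    fun _ => rfl
  -- injectivity
  have hinj : Function.Injective φ := by
    rw [injective_iff_map_eq_one]
    intro m hm
    rw [hφ] at hm
    set u := (Multiplicative.toAdd m).1 with hu
    set v := (Multiplicative.toAdd m).2 with hv
    have hu0 : u.val = 0 := by
      by_contra hs
      have hslt : u.val < p := ZMod.val_lt u
      have hcop : IsCoprime ((u.val : ℤ)) ((p : ℤ)) := by
        rw [Nat.isCoprime_iff_coprime]
        exact Nat.Coprime.symm ((Nat.Prime.coprime_iff_not_dvd hp).mpr
          (fun hdvd => hs (Nat.eq_zero_of_dvd_of_lt hdvd hslt)))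
      obtain ⟨u', v', huv⟩ := hcop
      have hys : y ^ ((u.val : ℤ)) = (c ^ (v.val : ℤ))⁻¹ := by
        rw [zpow_natCast, zpow_natCast]
        exact eq_inv_of_mul_eq_one_left hm
      have hymem : y ∈ Subgroup.zpowers c := by
        have h1 : y = (y ^ ((u.val : ℤ))) ^ u' * (y ^ ((p : ℤ))) ^ v' := by
          rw [← zpow_mul, ← zpow_mul, ← zpow_add]
          rw [show (u.val : ℤ) * u' + (p:ℤ) * v' = u' * (u.val : ℤ) + v' * (p:ℤ) by ring, huv,
            zpow_one]
        rw [h1, hys]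
        have h2 : (c ^ ((v.val : ℤ)))⁻¹ ^ u' ∈ Subgroup.zpowers c := by
          apply Subgroup.zpow_mem
          apply inv_mem
          exact Subgroup.zpow_mem _ (Subgroup.mem_zpowers c) _
        have h3 : (y ^ ((p : ℤ))) ^ v' = 1 := by
          rw [zpow_natCast, hyp, one_zpow]
        rw [h3, mul_one]
        exact h2
      exact hyc hymem
    have hv0 : v.val = 0 := by
      rw [hu0, pow_zero, one_mul] at hm
      by_contra hs
      have h1 : orderOf c ≤ v.val := orderOf_le_of_pow_eq_one (Nat.pos_of_ne_zero hs) hm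
      have h2 : v.val < q := ZMod.val_lt v
      omega
    have : Multiplicative.toAdd m = 0 := by
      have h1 : u = 0 := (ZMod.val_eq_zero u).mp hu0
      have h2 : v = 0 := (ZMod.val_eq_zero v).mp hv0
      exact Prod.ext (by rw [← hu, h1]; rfl) (by rw [← hv, h2]; rfl)
    exact this
  -- the range is H
  have hrle : φ.range ≤ H := by
    rintro g ⟨m, rfl⟩
    rw [hφ]
    exact mul_mem (pow_mem hyH _) (pow_mem hcH _)
  have hpq : p * q = p ^ (r - 1) := by
    rw [hq_def, ← pow_succ']
    congr 1
    omega
  have hcardφ : Nat.card φ.range = p * q := by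
    have h1 : Nat.card φ.range = Nat.card (Multiplicative (ZMod p × ZMod q)) :=
      Nat.card_congr (Equiv.ofInjective φ hinj).symm
    rw [h1, Nat.card_congr (Multiplicative.toAdd), Nat.card_prod, Nat.card_zmod, Nat.card_zmod]
  have hHcard : Nat.card H = p * q := by
    obtain ⟨m, hmle, hm⟩ := (Nat.dvd_prime_pow hp).mp
      (hcard ▸ Subgroup.card_subgroup_dvd_card H)
    have hmne : m ≠ r := by
      intro hmr
      apply hHtop
      apply Subgroup.eq_top_of_card_eq
      rw [hm, hmr, hcard]
    have hge : p * q ≤ Nat.card H := by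
      rw [← hcardφ]
      exact Subgroup.card_le_of_le hrle
    have h1 : p ^ (r - 1) ≤ p ^ m := by rw [← hpq, ← hm]; exact hge
    have h2 : r - 1 ≤ m := (pow_le_pow_iff_right₀ hp1).mp h1
    have h3 : m = r - 1 := by omega
    rw [hm, h3, ← hpq]
  have hrange : φ.range = H :=
    Subgroup.eq_of_le_of_card_ge hrle (by rw [hcardφ, hHcard])
  exact ⟨((MulEquiv.subgroupCongr hrange).symm.trans (MonoidHom.ofInjective hinj).symm)⟩
end

section
/- Let p be an odd prime, r ≥ 4 an integer, ε an integer not divisible by p, and G a group of order p^r generated by elements a, b, c satisfying a^p = b^p = c^{p^{r-2}} = [b,c] = 1, [a,b⁻¹] = c^{ε·p^{r-3}}, and [a,c] = b. Then the center of G is the cyclic subgroup generated by c^p, which has order p^{r-3}. -/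
lemma aux_pow_mod {G : Type} [Group G] (x : G) {n : ℕ} (h : x ^ n = 1) (t : ℕ) :
    x ^ t = x ^ (t % n) := by
  conv_lhs => rw [← Nat.div_add_mod t n]
  rw [pow_add, pow_mul, h, one_pow, one_mul]

lemma aux_zpow_red {G : Type} [Group G] (x : G) {n : ℕ} (h : x ^ n = 1) (t : ℤ) (w : ℕ)
    (hd : (n:ℤ) ∣ t - w) : x ^ t = x ^ w := by
  obtain ⟨s, hs⟩ := hd
  have ht : t = (w : ℤ) + n * s := by linarith
  rw [ht, zpow_add, zpow_natCast, zpow_mul, zpow_natCast, h, one_zpow, mul_one]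

lemma aux_zdvd (n : ℕ) [NeZero n] (t : ℤ) : (n:ℤ) ∣ t - ((t : ZMod n).val : ℤ) := by
  apply (ZMod.intCast_zmod_eq_zero_iff_dvd (t - ((t : ZMod n).val : ℤ)) n).1
  push_cast
  simp [ZMod.natCast_val, ZMod.intCast_zmod_cast]

lemma aux_conj_zpow {G : Type} [Group G] (g x : G) (n : ℤ) :
    (g⁻¹ * x * g) ^ n = g⁻¹ * x ^ n * g := by
  simpa using conj_zpow (i := n) (a := g⁻¹) (b := x)

/-- Let `p` be an odd prime, `r ≥ 4`, `ε` an integer not divisible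
by `p`, and `G` a group of order `p^r` generated by `a, b, c` with
`a^p = b^p = c^(p^(r-2)) = [b,c] = 1`, `[a,b⁻¹] = c^(ε·p^(r-3))`, `[a,c] = b`
(where `[x,y] = x⁻¹y⁻¹xy`). Then `Z(G) = ⟨c^p⟩` and `c^p` has order `p^(r-3)`. -/
theorem center_of_Gpre (p r : ℕ) (ε : ℤ) (hp : p.Prime) (hodd : Odd p)
    (hr : 4 ≤ r) (hε : ¬ (p : ℤ) ∣ ε)
    (G : Type) [Group G] (a b c : G)
    (hcard : Nat.card G = p ^ r)
    (hgen : Subgroup.closure {a, b, c} = ⊤)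
    (ha : a ^ p = 1) (hb : b ^ p = 1) (hc : c ^ p ^ (r - 2) = 1)
    (hbc : b⁻¹ * c⁻¹ * b * c = 1)
    (hab : a⁻¹ * b * a * b⁻¹ = c ^ (ε * (p : ℤ) ^ (r - 3)))
    (hac : a⁻¹ * c⁻¹ * a * c = b) :
    Subgroup.center G = Subgroup.zpowers (c ^ p) ∧ orderOf (c ^ p) = p ^ (r - 3) := by
  have hp0 : 0 < p := hp.pos
  set N : ℕ := p ^ (r - 2) with hN
  have hN0 : 0 < N := pow_pos hp0 _
  haveI : NeZero p := ⟨hp0.ne'⟩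
  haveI : NeZero N := ⟨hN0.ne'⟩
  set m : ℤ := ε * (p:ℤ) ^ (r - 3) with hm
  -- b and c commute
  have hBC : Commute b c := by
    have h1 : c * b * (b⁻¹ * c⁻¹ * b * c) = c * b * 1 := by rw [hbc]
    have h2 : b * c = c * b := by
      simpa [mul_assoc] using h1
    exact h2
  have mulH : ∀ i j u v : ℤ, (b^i*c^j)*(b^u*c^v) = b^(i+u)*c^(j+v) := by
    intro i j u v
    rw [show (b:G)^i*c^j*(b^u*c^v) = b^i*(c^j*b^u)*c^v by group,
      (hBC.symm.zpow_zpow j u).eq]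
    group
  -- conjugation formulas
  have hba : a⁻¹ * b * a = b * c ^ m := by
    rw [← (hBC.symm.zpow_left m).eq, ← hab]; group
  have hca : a⁻¹ * c * a = c * b⁻¹ := by
    have h1 : a⁻¹ * c⁻¹ * a = b * c⁻¹ := by rw [← hac]; group
    have h2 : a⁻¹ * c * a = (b * c⁻¹)⁻¹ := by rw [← h1]; group
    rw [h2, mul_inv_rev, inv_inv]
  -- p divides m
  have hr3 : r - 3 = (r - 4) + 1 := by omega
  have hpm : (p:ℤ) ∣ m := by
    refine ⟨ε * (p:ℤ)^(r-4), ?_⟩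
    rw [hm, hr3, pow_succ]; ring
  -- killers
  have hcN : c ^ (N:ℤ) = 1 := by rw [zpow_natCast]; exact hc
  have kb : ∀ i : ℤ, (p:ℤ) ∣ i → b ^ i = 1 := by
    rintro i ⟨s, rfl⟩
    rw [zpow_mul, zpow_natCast, hb, one_zpow]
  have kc : ∀ j : ℤ, (N:ℤ) ∣ j → c ^ j = 1 := by
    rintro j ⟨s, rfl⟩
    rw [zpow_mul, hcN, one_zpow]
  -- main conjugation formula
  have conjA : ∀ i j : ℤ, a⁻¹ * (b^i * c^j) * a = b^(i-j) * c^(j+m*i) := by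
    intro i j
    have e1 : a⁻¹ * (b^i * c^j) * a = (a⁻¹*b^i*a) * (a⁻¹*c^j*a) := by group
    rw [e1, ← aux_conj_zpow a b i, ← aux_conj_zpow a c j, hba, hca]
    have e2 : (b * c^m)^i = b^i * c^(m*i) := by
      rw [(hBC.zpow_right m).mul_zpow, ← zpow_mul]
    have e3 : (c * b⁻¹)^j = b^(-j) * c^j := by
      rw [(hBC.symm.inv_right).mul_zpow, inv_zpow, ← zpow_neg,
        (hBC.zpow_zpow (-j) j).symm.eq]
    rw [e2, e3, mulH, show i + -j = i - j by ring, show m*i + j = j + m*i by ring]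
  -- iterated conjugation
  have conjAk : ∀ (k : ℕ) (i j : ℤ), ∃ u v : ℤ,
      (a^k)⁻¹ * (b^i*c^j) * a^k = b^u * c^v ∧
      (p:ℤ) ∣ (u - (i - j*k)) ∧ (p:ℤ) ∣ (v - j) := by
    intro k
    induction k with
    | zero => intro i j; exact ⟨i, j, by simp, by simp, by simp⟩
    | succ k IH =>
      intro i j
      obtain ⟨u, v, h, hd1, hd2⟩ := IH i j
      refine ⟨u - v, v + m*u, ?_, ?_, ?_⟩
      · have e : (a^(k+1))⁻¹ * (b^i*c^j) * a^(k+1)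
            = a⁻¹ * ((a^k)⁻¹ * (b^i*c^j) * a^k) * a := by
          rw [pow_succ]; group
        rw [e, h, conjA u v]
      · have e : u - v - (i - j*((k:ℤ)+1)) = (u - (i - j*k)) - (v - j) := by ring
        have : ((k:ℤ)+1) = ((k+1 : ℕ) : ℤ) := by push_cast; ring
        rw [← this, e]
        exact dvd_sub hd1 hd2
      · have e : v + m*u - j = (v - j) + m*u := by ring
        rw [e]
        exact dvd_add hd2 (hpm.mul_right u)
  -- every element has a normal form
  have hrep : ∀ g : G, ∃ (t : ℕ) (i j : ℤ), g = a ^ t * (b ^ i * c ^ j) := by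
    have hmemS : ∀ g ∈ Subgroup.closure {a, b, c},
        ∃ (t : ℕ) (i j : ℤ), g = a ^ t * (b ^ i * c ^ j) := by
      intro g hg
      induction hg using Subgroup.closure_induction with
      | mem x hx =>
        simp only [Set.mem_insert_iff, Set.mem_singleton_iff] at hx
        rcases hx with rfl | rfl | rfl
        · exact ⟨1, 0, 0, by simp⟩
        · exact ⟨0, 1, 0, by simp⟩
        · exact ⟨0, 0, 1, by simp⟩
      | one => exact ⟨0, 0, 0, by simp⟩
      | mul x y _ _ hx hy =>
        obtain ⟨t, i, j, rfl⟩ := hx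
        obtain ⟨s, u, v, rfl⟩ := hy
        obtain ⟨u', v', h, -, -⟩ := conjAk s i j
        refine ⟨t + s, u' + u, v' + v, ?_⟩
        rw [← mulH, pow_add, ← h]
        group
      | inv x _ hx =>
        obtain ⟨t, i, j, rfl⟩ := hx
        refine ⟨p - t % p, ?_⟩
        have hinv : (a ^ t)⁻¹ = a ^ (p - t % p) := by
          apply inv_eq_of_mul_eq_one_right
          rw [← pow_add]
          have hd : p ∣ t + (p - t % p) := by
            have h2 : t % p < p := Nat.mod_lt t hp0
            have h3 := Nat.div_add_mod t p
            have h4 : p * (t / p + 1) = p * (t / p) + p := by ring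
            exact ⟨t / p + 1, by omega⟩
          obtain ⟨s, hs⟩ := hd
          rw [hs, pow_mul, ha, one_pow]
        obtain ⟨u, v, h, -, -⟩ := conjAk (p - t % p) (-i) (-j)
        have hinv2 : (b^i*c^j)⁻¹ = b^(-i)*c^(-j) := by
          apply inv_eq_of_mul_eq_one_right
          rw [mulH]; simp
        refine ⟨u, v, ?_⟩
        rw [mul_inv_rev, hinv, hinv2, ← h]
        group
    intro g
    exact hmemS g (by rw [hgen]; exact Subgroup.mem_top g)
  -- finiteness and the counting map
  haveI : Finite G := Nat.finite_of_card_ne_zero (by rw [hcard]; positivity)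
  haveI : Fintype G := Fintype.ofFinite G
  set f : ZMod p × ZMod p × ZMod N → G :=
    fun x => a ^ x.1.val * (b ^ x.2.1.val * c ^ x.2.2.val) with hf
  have hsurj : Function.Surjective f := by
    intro g
    obtain ⟨t, i, j, rfl⟩ := hrep g
    refine ⟨((t : ZMod p), (i : ZMod p), (j : ZMod N)), ?_⟩
    simp only [hf]
    congr 1
    · rw [ZMod.val_natCast]
      exact (aux_pow_mod a ha t).symm
    congr 1
    · exact (aux_zpow_red b hb i _ (aux_zdvd p i)).symm
    · exact (aux_zpow_red c hc j _ (aux_zdvd N j)).symm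
  have hcards : Fintype.card (ZMod p × ZMod p × ZMod N) = Fintype.card G := by
    rw [Fintype.card_prod, Fintype.card_prod, ZMod.card, ZMod.card,
      ← Nat.card_eq_fintype_card, hcard]
    show p * (p * p ^ (r - 2)) = p ^ r
    have h2 : r - 2 + 2 = r := by omega
    calc p * (p * p ^ (r-2)) = p ^ (r - 2 + 2) := by ring
    _ = p ^ r := by rw [h2]
  have hinj : Function.Injective f :=
    ((Fintype.bijective_iff_surjective_and_card f).2 ⟨hsurj, hcards⟩).injective
  -- uniqueness of normal forms in H
  have repzero : ∀ i j : ℤ, b^i * c^j = 1 → ((p:ℤ) ∣ i ∧ (N:ℤ) ∣ j) := by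
    intro i j h
    have h1 : f (0, (i : ZMod p), (j : ZMod N)) = f (0, 0, 0) := by
      simp only [hf, ZMod.val_zero, pow_zero, one_mul, mul_one]
      rw [← aux_zpow_red b hb i _ (aux_zdvd p i), ← aux_zpow_red c hc j _ (aux_zdvd N j), h]
    have h2 := hinj h1
    rw [Prod.ext_iff, Prod.ext_iff] at h2
    obtain ⟨-, h3, h4⟩ := h2
    exact ⟨(ZMod.intCast_zmod_eq_zero_iff_dvd i p).1 h3,
      (ZMod.intCast_zmod_eq_zero_iff_dvd j N).1 h4⟩
  have repeq : ∀ i j u v : ℤ, b^i*c^j = b^u*c^v → ((p:ℤ) ∣ i - u ∧ (N:ℤ) ∣ j - v) := by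
    intro i j u v h
    have h1 : (b^i*c^j) * (b^(-u)*c^(-v)) = (b^u*c^v) * (b^(-u)*c^(-v)) := by rw [h]
    rw [mulH, mulH] at h1
    simp only [add_neg_cancel] at h1
    have h2 : b^(i + -u) * c^(j + -v) = 1 := by rw [h1]; simp
    obtain ⟨d1, d2⟩ := repzero _ _ h2
    constructor
    · simpa [sub_eq_add_neg] using d1
    · simpa [sub_eq_add_neg] using d2
  -- order of c
  have hOc : orderOf c = N := by
    refine Nat.dvd_antisymm (orderOf_dvd_of_pow_eq_one hc) ?_
    have h1 : c ^ ((orderOf c : ℤ)) = 1 := by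
      rw [zpow_natCast]; exact pow_orderOf_eq_one c
    have h2 : b ^ (0:ℤ) * c ^ ((orderOf c : ℤ)) = 1 := by simpa using h1
    have := (repzero 0 (orderOf c) h2).2
    exact_mod_cast this
  -- c^p is central
  have hacp : a⁻¹ * c ^ (p:ℤ) * a = c ^ (p:ℤ) := by
    have h1 := conjA 0 (p:ℤ)
    simp only [zpow_zero, one_mul, zero_sub, mul_zero, add_zero] at h1
    rw [h1, kb (-(p:ℤ)) ⟨-1, by ring⟩, one_mul]
  have hcp_comm_a : a * c ^ p = c ^ p * a := by
    have h1 : a⁻¹ * c ^ p * a = c ^ p := by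
      rw [← zpow_natCast c p]; exact hacp
    have h2 : c ^ p * a = a * (a⁻¹ * c ^ p * a) := by group
    rw [h1] at h2
    exact h2.symm
  have hcp_center : c ^ p ∈ Subgroup.center G := by
    rw [Subgroup.mem_center_iff]
    intro g
    have hg : g ∈ Subgroup.closure {a, b, c} := by rw [hgen]; exact Subgroup.mem_top g
    have hle : Subgroup.closure ({a, b, c} : Set G) ≤ Subgroup.centralizer {c ^ p} := by
      rw [Subgroup.closure_le]
      rintro x hx
      simp only [Set.mem_insert_iff, Set.mem_singleton_iff] at hx
      rw [SetLike.mem_coe, Subgroup.mem_centralizer_iff]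
      rintro y rfl
      rcases hx with rfl | rfl | rfl
      · exact hcp_comm_a.symm
      · exact ((hBC.pow_right p).eq).symm
      · exact (((Commute.refl x).pow_right p).eq).symm
    have := hle hg
    rw [Subgroup.mem_centralizer_iff] at this
    exact (this (c ^ p) rfl).symm
  constructor
  · -- center = zpowers (c^p)
    apply le_antisymm
    · intro z hz
      obtain ⟨t, i, j, rfl⟩ := hrep z
      -- z commutes with c, hence a^t commutes with c
      have hzc := (Subgroup.mem_center_iff.1 hz c)
      have hHc : (b^i*c^j) * c = c * (b^i*c^j) := ((hBC.zpow_left i).mul_left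
        ((Commute.refl c).zpow_left j)).eq
      have h1 : a^t * c = c * a^t := by
        have h2 : (a^t * c) * (b^i*c^j) = (c * a^t) * (b^i*c^j) := by
          calc a^t * c * (b^i*c^j) = a^t * (c * (b^i*c^j)) := mul_assoc _ _ _
          _ = a^t * ((b^i*c^j) * c) := by rw [hHc]
          _ = (a^t * (b^i*c^j)) * c := (mul_assoc _ _ _).symm
          _ = c * (a^t * (b^i*c^j)) := hzc.symm
          _ = (c * a^t) * (b^i*c^j) := (mul_assoc _ _ _).symm
        exact mul_right_cancel h2
      -- deduce p ∣ t
      obtain ⟨u, v, hconj, hd1, hd2⟩ := conjAk t 0 1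
      have hfix : (a^t)⁻¹ * (b^(0:ℤ)*c^(1:ℤ)) * a^t = b^(0:ℤ)*c^(1:ℤ) := by
        simp only [zpow_zero, one_mul, zpow_one]
        calc (a^t)⁻¹ * c * a^t = (a^t)⁻¹ * (c * a^t) := by group
        _ = (a^t)⁻¹ * (a^t * c) := by rw [← h1]
        _ = c := by group
      have heq : b^u * c^v = b^(0:ℤ) * c^(1:ℤ) := by rw [← hconj, hfix]
      have hpu : (p:ℤ) ∣ u := by simpa using (repeq u v 0 1 heq).1
      have hpt : (p:ℤ) ∣ (t:ℤ) := by
        have h3 : (p:ℤ) ∣ u - (0 - 1 * t) := hd1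
        have h4 : u - (0 - 1*t) = u + t := by ring
        rw [h4] at h3
        have := dvd_sub h3 hpu
        simpa using this
      have hat : a ^ t = 1 := by
        obtain ⟨s, hs⟩ := (Int.natCast_dvd_natCast.1 hpt)
        rw [hs, pow_mul, ha, one_pow]
      rw [hat, one_mul]
      rw [hat, one_mul] at hz
      -- z = b^i c^j commutes with a
      have hza := (Subgroup.mem_center_iff.1 hz a)
      have h5 : a⁻¹ * (b^i*c^j) * a = b^i*c^j := by
        calc a⁻¹ * (b^i*c^j) * a = a⁻¹ * ((b^i*c^j) * a) := by group
        _ = a⁻¹ * (a * (b^i*c^j)) := by rw [hza]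
        _ = b^i*c^j := by group
      rw [conjA i j] at h5
      obtain ⟨hd3, hd4⟩ := repeq _ _ _ _ h5
      have hpj : (p:ℤ) ∣ j := by
        have : i - j - i = -j := by ring
        rw [this] at hd3
        simpa using hd3
      have hpi : (p:ℤ) ∣ i := by
        have h6 : (N:ℤ) ∣ m * i := by
          have : j + m*i - j = m*i := by ring
          rwa [this] at hd4
        have hNe : (N:ℤ) = (p:ℤ)^(r-3) * p := by
          rw [hN]
          push_cast
          rw [show r - 2 = (r-3) + 1 by omega, pow_succ]
        obtain ⟨s, hs⟩ := h6
        rw [hNe, hm] at hs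
        have h7 : (p:ℤ)^(r-3) * (ε * i) = (p:ℤ)^(r-3) * (p * s) := by linear_combination hs
        have h8 : ε * i = p * s := by
          have hne : ((p:ℤ))^(r-3) ≠ 0 := by positivity
          exact mul_left_cancel₀ hne h7
        have h9 : (p:ℤ) ∣ ε * i := ⟨s, h8⟩
        rcases ((Nat.prime_iff_prime_int.mp hp).dvd_mul.1 h9) with h | h
        · exact absurd h hε
        · exact h
      rw [kb i hpi, one_mul]
      obtain ⟨j', hj'⟩ := hpj
      rw [Subgroup.mem_zpowers_iff]
      refine ⟨j', ?_⟩
      rw [← zpow_natCast c p, ← zpow_mul, ← hj']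
    · exact Subgroup.zpowers_le.2 hcp_center
  · -- order of c^p
    rw [orderOf_pow c, hOc]
    have hgcd : N.gcd p = p := Nat.gcd_eq_right (dvd_pow_self p (by omega : r - 2 ≠ 0))
    rw [hgcd, hN, show r - 2 = (r-3) + 1 by omega, pow_succ, Nat.mul_div_cancel _ hp0]
end

section
/- Let p be an odd prime, r ≥ 4 an integer, ε an integer not divisible by p, and G a group of order p^r generated by elements a, b, c satisfying a^p = b^p = c^{p^{r-2}} = [b,c] = 1, [a,b⁻¹] = c^{ε·p^{r-3}}, and [a,c] = b. Then for all integers i, j, k, s, t, u one has [aⁱbʲcᵏ, aˢbᵗcᵘ] = b^{iu - sk} · c^{ε·p^{r-3}·(u·i(i-1)/2 + js - it - k·s(s-1)/2)}. -/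
/-- Let `p` be an odd prime, `r ≥ 4`, `ε` an integer not divisible
by `p`, and `G` a group of order `p^r` generated by `a, b, c` with
`a^p = b^p = c^(p^(r-2)) = [b,c] = 1`, `[a,b⁻¹] = c^(ε·p^(r-3))`, `[a,c] = b`
(where `[x,y] = x⁻¹y⁻¹xy`). Then for all integers `i, j, k, s, t, u`:
`[aⁱbʲcᵏ, aˢbᵗcᵘ] = b^(iu - sk) · c^(ε·p^(r-3)·(u·i(i-1)/2 + js - it - k·s(s-1)/2))`. -/
theorem commutator_formula_Gpre (p r : ℕ) (ε : ℤ) (hp : p.Prime) (hodd : Odd p)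
    (hr : 4 ≤ r) (hε : ¬ (p : ℤ) ∣ ε)
    (G : Type) [Group G] (a b c : G)
    (hcard : Nat.card G = p ^ r)
    (hgen : Subgroup.closure {a, b, c} = ⊤)
    (ha : a ^ p = 1) (hb : b ^ p = 1) (hc : c ^ p ^ (r - 2) = 1)
    (hbc : b⁻¹ * c⁻¹ * b * c = 1)
    (hab : a⁻¹ * b * a * b⁻¹ = c ^ (ε * (p : ℤ) ^ (r - 3)))
    (hac : a⁻¹ * c⁻¹ * a * c = b) :
    ∀ i j k s t u : ℤ,
      (a ^ i * b ^ j * c ^ k)⁻¹ * (a ^ s * b ^ t * c ^ u)⁻¹ *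
          (a ^ i * b ^ j * c ^ k) * (a ^ s * b ^ t * c ^ u) =
        b ^ (i * u - s * k) *
          c ^ (ε * (p : ℤ) ^ (r - 3) *
            (u * (i * (i - 1) / 2) + j * s - i * t - k * (s * (s - 1) / 2))) := by
  intro i j k s t u
  set m : ℤ := ε * (p : ℤ) ^ (r - 3) with hm
  -- basic commutation of b and c
  have hcomm : Commute b c := by
    have h := congrArg (fun x => c * b * x) hbc
    exact (show b * c = c * b by simpa [mul_assoc] using h)
  have hswap : ∀ x y : ℤ, c ^ y * b ^ x = b ^ x * c ^ y :=
    fun x y => ((hcomm.zpow_zpow x y).symm).eq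
  -- B-form helpers
  have hBmul : ∀ x y x' y' : ℤ, (b ^ x * c ^ y) * (b ^ x' * c ^ y') = b ^ (x + x') * c ^ (y + y') := by
    intro x y x' y'
    calc b ^ x * c ^ y * (b ^ x' * c ^ y') = b ^ x * (c ^ y * b ^ x') * c ^ y' := by group
      _ = b ^ x * (b ^ x' * c ^ y) * c ^ y' := by rw [hswap]
      _ = b ^ (x + x') * c ^ (y + y') := by rw [zpow_add, zpow_add]; group
  have hBzpow : ∀ x y n : ℤ, (b ^ x * c ^ y) ^ n = b ^ (x * n) * c ^ (y * n) := by
    intro x y n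
    rw [(hcomm.zpow_zpow x y).mul_zpow, ← zpow_mul, ← zpow_mul]
  -- m-divisibility kill lemmas
  have hbz : b ^ ((p : ℕ) : ℤ) = 1 := by rw [zpow_natCast, hb]
  have hcz : c ^ (((p ^ (r - 2) : ℕ)) : ℤ) = 1 := by rw [zpow_natCast, hc]
  have hr3 : ((p : ℤ)) ^ (r - 3) = (p : ℤ) * (p : ℤ) ^ (r - 4) := by
    rw [← pow_succ']; congr 1; omega
  have hbmw : ∀ w : ℤ, b ^ (m * w) = 1 := by
    intro w
    have h : m * w = ((p : ℕ) : ℤ) * (ε * (p : ℤ) ^ (r - 4) * w) := by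
      rw [hm, hr3]; push_cast; ring
    rw [h, zpow_mul, hbz, one_zpow]
  have hppow : ((p : ℤ)) ^ (r - 3) * ((p : ℤ)) ^ (r - 3)
      = ((p : ℤ)) ^ (r - 2) * ((p : ℤ)) ^ (r - 4) := by
    rw [← pow_add, ← pow_add]; congr 1; omega
  have hcmw : ∀ w : ℤ, c ^ (m * (m * w)) = 1 := by
    intro w
    have h : m * (m * w) = (((p ^ (r - 2) : ℕ)) : ℤ) * (ε * ε * (p : ℤ) ^ (r - 4) * w) := by
      push_cast
      rw [hm]
      linear_combination (ε * ε * w) * hppow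
    rw [h, zpow_mul, hcz, one_zpow]
  have hBb : ∀ x y w : ℤ, b ^ (x + m * w) * c ^ y = b ^ x * c ^ y := by
    intro x y w; rw [zpow_add, hbmw, mul_one]
  have hBc2 : ∀ x y w : ℤ, b ^ x * c ^ (y + m * (m * w)) = b ^ x * c ^ y := by
    intro x y w; rw [zpow_add, hcmw, mul_one]
  -- base conjugation relations
  have hconj1 : ∀ (x : G) (n : ℤ), (a⁻¹ * x * a) ^ n = a⁻¹ * x ^ n * a := by
    intro x n
    simpa [inv_inv] using (conj_zpow (i := n) (a := a⁻¹) (b := x))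
  have hconj1' : ∀ (x : G) (n : ℤ), (a * x * a⁻¹) ^ n = a * x ^ n * a⁻¹ := by
    intro x n
    exact conj_zpow
  have h1 : a⁻¹ * b * a = b ^ (1 : ℤ) * c ^ m := by
    have h := congrArg (· * b) hab
    simp only [inv_mul_cancel_right] at h
    rw [zpow_one, h]
    simpa using hswap 1 m
  have h2 : a⁻¹ * c * a = b ^ (-1 : ℤ) * c ^ (1 : ℤ) := by
    have h := congrArg (· * c⁻¹) hac
    simp only [mul_inv_cancel_right] at h
    -- h : a⁻¹ * c⁻¹ * a = b * c⁻¹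
    rw [show a⁻¹ * c * a = (a⁻¹ * c⁻¹ * a)⁻¹ by group, h]
    simp only [mul_inv_rev, inv_inv]
    rw [zpow_one, zpow_neg_one]
    exact hcomm.symm.inv_right.eq
  -- centrality of c^m
  have hzc0 : a⁻¹ * c ^ m * a = c ^ m := by
    rw [← hconj1 c m, h2, hBzpow]
    rw [show ((-1 : ℤ)) * m = m * (-1) by ring, hbmw, one_mul, one_mul]
  have hca : Commute a (c ^ m) := by
    have h := congrArg (a * ·) hzc0
    simp only [← mul_assoc, mul_inv_cancel, one_mul] at h
    exact h.symm
  have h1' : a * b * a⁻¹ = b ^ (1 : ℤ) * c ^ (-m) := by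
    have h := congrArg (fun x => a * x * a⁻¹) h1
    rw [show a * (a⁻¹ * b * a) * a⁻¹ = b by group] at h
    -- h : b = a * (b^1 * c^m) * a⁻¹
    have h2' : a * (b ^ (1:ℤ) * c ^ m) * a⁻¹ = (a * b * a⁻¹) * c ^ m := by
      rw [zpow_one]
      calc a * (b * c ^ m) * a⁻¹ = a * b * (c ^ m * a⁻¹) := by group
        _ = a * b * (a⁻¹ * c ^ m) := by rw [(hca.inv_left.symm).eq]
        _ = (a * b * a⁻¹) * c ^ m := by group
    rw [h2'] at h
    rw [zpow_one, zpow_neg, eq_mul_inv_iff_mul_eq]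
    exact h.symm
  have hBinv : ∀ x y : ℤ, (b ^ x * c ^ y)⁻¹ = b ^ (-x) * c ^ (-y) := by
    intro x y
    rw [mul_inv_rev, ← zpow_neg, ← zpow_neg, hswap]
  have h2' : a * c * a⁻¹ = b ^ (1 : ℤ) * c ^ (1 - m) := by
    have h := congrArg (fun x => a * x * a⁻¹) h2
    rw [show a * (a⁻¹ * c * a) * a⁻¹ = c by group] at h
    have e : a * (b ^ (-1:ℤ) * c ^ (1:ℤ)) * a⁻¹
        = (a * b * a⁻¹) ^ (-1:ℤ) * ((a * c * a⁻¹) ^ (1:ℤ)) := by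
      rw [hconj1', hconj1']; group
    rw [e, h1', hBzpow, zpow_one] at h
    rw [show (1:ℤ)*(-1) = (-1:ℤ) by ring, show (-m)*(-1) = m by ring] at h
    calc a * c * a⁻¹ = (b ^ (-1:ℤ) * c ^ m)⁻¹ * c := by rw [eq_inv_mul_iff_mul_eq]; exact h.symm
      _ = (b ^ (1:ℤ) * c ^ (-m)) * c ^ (1:ℤ) := by rw [hBinv]; norm_num
      _ = b ^ (1:ℤ) * c ^ (-m + 1) := by rw [mul_assoc, ← zpow_add]
      _ = b ^ (1:ℤ) * c ^ (1 - m) := by rw [show -m + 1 = 1 - m by ring]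
  have hconjB : ∀ x y : ℤ, a⁻¹ * (b ^ x * c ^ y) * a = b ^ (x - y) * c ^ (m * x + y) := by
    intro x y
    calc a⁻¹ * (b ^ x * c ^ y) * a = (a⁻¹ * b * a) ^ x * (a⁻¹ * c * a) ^ y := by
          rw [hconj1, hconj1]; group
      _ = (b ^ (1:ℤ) * c ^ m) ^ x * (b ^ (-1:ℤ) * c ^ (1:ℤ)) ^ y := by rw [h1, h2]
      _ = (b ^ (1*x) * c ^ (m*x)) * (b ^ ((-1)*y) * c ^ (1*y)) := by rw [hBzpow, hBzpow]
      _ = b ^ (1*x + (-1)*y) * c ^ (m*x + 1*y) := hBmul _ _ _ _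
      _ = b ^ (x - y) * c ^ (m*x + y) := by
          rw [show 1*x + (-1)*y = x - y by ring, show m*x + 1*y = m*x + y by ring]
  have hconjB' : ∀ x y : ℤ, a * (b ^ x * c ^ y) * a⁻¹
      = b ^ (x + y) * c ^ (y - m * x - m * y) := by
    intro x y
    calc a * (b ^ x * c ^ y) * a⁻¹ = (a * b * a⁻¹) ^ x * (a * c * a⁻¹) ^ y := by
          rw [hconj1', hconj1']; group
      _ = (b ^ (1:ℤ) * c ^ (-m)) ^ x * (b ^ (1:ℤ) * c ^ (1 - m)) ^ y := by rw [h1', h2']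
      _ = (b ^ (1*x) * c ^ ((-m)*x)) * (b ^ (1*y) * c ^ ((1-m)*y)) := by rw [hBzpow, hBzpow]
      _ = b ^ (1*x + 1*y) * c ^ ((-m)*x + (1-m)*y) := hBmul _ _ _ _
      _ = b ^ (x + y) * c ^ (y - m*x - m*y) := by
          rw [show 1*x + 1*y = x + y by ring, show (-m)*x + (1-m)*y = y - m*x - m*y by ring]
  -- main conjugation formula
  have PB : ∀ n x y : ℤ, a ^ (-n) * (b ^ x * c ^ y) * a ^ n
      = b ^ (x - n*y) * c ^ (y + m*(n*x - (n*(n-1)/2)*y)) := by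
    intro n
    induction n using Int.induction_on with
    | zero =>
      intro x y
      norm_num
    | succ n ih =>
      intro x y
      obtain ⟨q, hq⟩ : ∃ q : ℤ, (n:ℤ)*((n:ℤ)-1) = 2*q := by
        obtain ⟨w, hw⟩ := Int.even_mul_succ_self ((n:ℤ)-1)
        exact ⟨w, by linear_combination hw⟩
      have hT1 : (n:ℤ)*((n:ℤ)-1)/2 = q := by rw [hq]; omega
      have hT2 : ((n:ℤ)+1)*(((n:ℤ)+1)-1)/2 = q + n := by
        rw [show ((n:ℤ)+1)*(((n:ℤ)+1)-1) = 2*(q+(n:ℤ)) by linear_combination hq]; omega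
      have ih' := ih x y
      rw [hT1] at ih'
      rw [hT2]
      calc a ^ (-((n:ℤ)+1)) * (b ^ x * c ^ y) * a ^ ((n:ℤ)+1)
          = a⁻¹ * (a ^ (-(n:ℤ)) * (b ^ x * c ^ y) * a ^ (n:ℤ)) * a := by
            rw [show (-((n:ℤ)+1)) = -1 + -(n:ℤ) by ring, zpow_add, zpow_neg_one,
              zpow_add_one]
            group
        _ = a⁻¹ * (b ^ (x - (n:ℤ)*y) * c ^ (y + m*((n:ℤ)*x - q*y))) * a := by rw [ih']
        _ = b ^ ((x - (n:ℤ)*y) - (y + m*((n:ℤ)*x - q*y)))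
            * c ^ (m*(x - (n:ℤ)*y) + (y + m*((n:ℤ)*x - q*y))) := hconjB _ _
        _ = b ^ (x - ((n:ℤ)+1)*y) * c ^ (y + m*(((n:ℤ)+1)*x - (q+(n:ℤ))*y)) := by
            rw [show (x - (n:ℤ)*y) - (y + m*((n:ℤ)*x - q*y))
                = (x - ((n:ℤ)+1)*y) + m * (-((n:ℤ)*x - q*y)) by ring, hBb]
            rw [show m*(x - (n:ℤ)*y) + (y + m*((n:ℤ)*x - q*y))
                = y + m*(((n:ℤ)+1)*x - (q+(n:ℤ))*y) by ring]
    | pred n ih =>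
      intro x y
      obtain ⟨q, hq⟩ : ∃ q : ℤ, (-(n:ℤ))*((-(n:ℤ))-1) = 2*q := by
        obtain ⟨w, hw⟩ := Int.even_mul_succ_self ((-(n:ℤ))-1)
        exact ⟨w, by linear_combination hw⟩
      have hT1 : (-(n:ℤ))*((-(n:ℤ))-1)/2 = q := by rw [hq]; omega
      have hT2 : (-(n:ℤ)-1)*((-(n:ℤ)-1)-1)/2 = q + (n:ℤ) + 1 := by
        rw [show (-(n:ℤ)-1)*((-(n:ℤ)-1)-1) = 2*(q+(n:ℤ)+1) by linear_combination hq]; omega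
      have ih' := ih x y
      rw [hT1] at ih'
      rw [hT2]
      calc a ^ (-(-(n:ℤ)-1)) * (b ^ x * c ^ y) * a ^ (-(n:ℤ)-1)
          = a * (a ^ (-(-(n:ℤ))) * (b ^ x * c ^ y) * a ^ (-(n:ℤ))) * a⁻¹ := by
            rw [show (-(-(n:ℤ)-1)) = 1 + -(-(n:ℤ)) by ring, zpow_add, zpow_one,
              show (-(n:ℤ)-1) = -(n:ℤ) + (-1) by ring, zpow_add, zpow_neg_one]
            group
        _ = a * (b ^ (x - (-(n:ℤ))*y) * c ^ (y + m*((-(n:ℤ))*x - q*y))) * a⁻¹ := by rw [ih']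
        _ = b ^ ((x - (-(n:ℤ))*y) + (y + m*((-(n:ℤ))*x - q*y)))
            * c ^ ((y + m*((-(n:ℤ))*x - q*y)) - m*(x - (-(n:ℤ))*y)
                - m*(y + m*((-(n:ℤ))*x - q*y))) := hconjB' _ _
        _ = b ^ (x - (-(n:ℤ)-1)*y) * c ^ (y + m*((-(n:ℤ)-1)*x - (q+(n:ℤ)+1)*y)) := by
            rw [show (x - (-(n:ℤ))*y) + (y + m*((-(n:ℤ))*x - q*y))
                = (x - (-(n:ℤ)-1)*y) + m * (-(n:ℤ)*x - q*y) by ring, hBb]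
            rw [show (y + m*((-(n:ℤ))*x - q*y)) - m*(x - (-(n:ℤ))*y)
                - m*(y + m*((-(n:ℤ))*x - q*y))
                = (y + m*((-(n:ℤ)-1)*x - (q+(n:ℤ)+1)*y)) + m*(m*((n:ℤ)*x + q*y)) by ring,
              hBc2]
  -- the two instances we need
  have H1 : a ^ (-i) * (b ^ (-t) * c ^ (-u))
      = (b ^ (-t + i*u) * c ^ (-u + m*(-(i*t) + (i*(i-1)/2)*u))) * a ^ (-i) := by
    have h := PB i (-t) (-u)
    have h2 := congrArg (· * a ^ (-i)) h
    rw [show a ^ (-i) * (b ^ (-t) * c ^ (-u)) * a ^ i * a ^ (-i)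
        = a ^ (-i) * (b ^ (-t) * c ^ (-u)) by group] at h2
    rw [h2]
    rw [show (-t) - i*(-u) = -t + i*u by ring,
      show (-u) + m*(i*(-t) - (i*(i-1)/2)*(-u)) = -u + m*(-(i*t) + (i*(i-1)/2)*u) by ring]
  have H2 : a ^ (-s) * (b ^ j * c ^ k)
      = (b ^ (j - s*k) * c ^ (k + m*(s*j - (s*(s-1)/2)*k))) * a ^ (-s) := by
    have h := PB s j k
    have h2 := congrArg (· * a ^ (-s)) h
    rw [show a ^ (-s) * (b ^ j * c ^ k) * a ^ s * a ^ (-s)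
        = a ^ (-s) * (b ^ j * c ^ k) by group] at h2
    rw [h2]
  -- inverses in B-form
  have hXinv : (a ^ i * b ^ j * c ^ k)⁻¹ = (b ^ (-j) * c ^ (-k)) * a ^ (-i) := by
    rw [show a ^ i * b ^ j * c ^ k = a ^ i * (b ^ j * c ^ k) by group, mul_inv_rev, hBinv]
    group
  have hYinv : (a ^ s * b ^ t * c ^ u)⁻¹ = (b ^ (-t) * c ^ (-u)) * a ^ (-s) := by
    rw [show a ^ s * b ^ t * c ^ u = a ^ s * (b ^ t * c ^ u) by group, mul_inv_rev, hBinv]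
    group
  rw [hXinv, hYinv]
  calc (b ^ (-j) * c ^ (-k)) * a ^ (-i) * ((b ^ (-t) * c ^ (-u)) * a ^ (-s))
        * (a ^ i * b ^ j * c ^ k) * (a ^ s * b ^ t * c ^ u)
      = (b ^ (-j) * c ^ (-k)) * ((a ^ (-i) * (b ^ (-t) * c ^ (-u)))
          * (a ^ (-s) * (a ^ i * ((b ^ j * c ^ k) * (a ^ s * (b ^ t * c ^ u)))))) := by
        group
    _ = (b ^ (-j) * c ^ (-k)) * (((b ^ (-t + i*u) * c ^ (-u + m*(-(i*t) + (i*(i-1)/2)*u))) * a ^ (-i))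
          * (a ^ (-s) * (a ^ i * ((b ^ j * c ^ k) * (a ^ s * (b ^ t * c ^ u)))))) := by
        rw [H1]
    _ = (b ^ (-j) * c ^ (-k)) * ((b ^ (-t + i*u) * c ^ (-u + m*(-(i*t) + (i*(i-1)/2)*u)))
          * ((a ^ (-s) * (b ^ j * c ^ k)) * (a ^ s * (b ^ t * c ^ u)))) := by
        group
    _ = (b ^ (-j) * c ^ (-k)) * ((b ^ (-t + i*u) * c ^ (-u + m*(-(i*t) + (i*(i-1)/2)*u)))
          * (((b ^ (j - s*k) * c ^ (k + m*(s*j - (s*(s-1)/2)*k))) * a ^ (-s)) * (a ^ s * (b ^ t * c ^ u)))) := by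
        rw [H2]
    _ = (b ^ (-j) * c ^ (-k)) * ((b ^ (-t + i*u) * c ^ (-u + m*(-(i*t) + (i*(i-1)/2)*u)))
          * ((b ^ (j - s*k) * c ^ (k + m*(s*j - (s*(s-1)/2)*k))) * (b ^ t * c ^ u))) := by
        group
    _ = b ^ (i * u - s * k) * c ^ (m * (u * (i * (i - 1) / 2) + j * s - i * t - k * (s * (s - 1) / 2))) := by
        rw [hBmul, hBmul, hBmul]
        rw [show -j + (-t + i * u + (j - s * k + t)) = i * u - s * k by ring,
          show -k + (-u + m * (-(i * t) + i * (i - 1) / 2 * u) + (k + m * (s * j - s * (s - 1) / 2 * k) + u))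
            = m * (u * (i * (i - 1) / 2) + j * s - i * t - k * (s * (s - 1) / 2)) by ring]
end

section
/- Let k ≥ 2 be an integer. No subgroup of GL₂(ℤ/3ᵏ) that is isomorphic (as an abstract group) to GL₂(𝔽₃) contains the matrix [[1,-3],[1,(-3)^{k-1}-2]]. -/
set_option maxRecDepth 100000 in
set_option maxHeartbeats 1000000 in
/-- In `GL₂(𝔽₃)`, every element of order 3 is conjugate to its inverse. -/
lemma gl2_zmod3_conj_inv_of_order_three :
    ∀ x : Matrix.GeneralLinearGroup (Fin 2) (ZMod 3),
      x ^ 3 = 1 → x ≠ 1 → ∃ y, y * x * y⁻¹ = x⁻¹ := by decide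

/-- For `k ≥ 2`, no subgroup of `GL₂(ℤ/3ᵏ)` isomorphic to
`GL₂(𝔽₃)` contains the matrix `[[1,-3],[1,(-3)^(k-1)-2]]`. -/
theorem gl2_lift_not_exists_gamma1 (k : ℕ) (hk : 2 ≤ k)
    (M : Matrix.GeneralLinearGroup (Fin 2) (ZMod (3 ^ k)))
    (hM : (M : Matrix (Fin 2) (Fin 2) (ZMod (3 ^ k))) =
      !![1, -3; 1, (-3 : ZMod (3 ^ k)) ^ (k - 1) - 2]) :
    ∀ H : Subgroup (Matrix.GeneralLinearGroup (Fin 2) (ZMod (3 ^ k))),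
      Nonempty (H ≃* Matrix.GeneralLinearGroup (Fin 2) (ZMod 3)) → M ∉ H := by
  rintro H ⟨e⟩ hMH
  set ε : ZMod (3 ^ k) := (-3) ^ (k - 1) with hε
  have h3k : ((-3 : ZMod (3 ^ k))) ^ k = 0 := by
    have : ((3 ^ k : ℕ) : ZMod (3 ^ k)) = 0 := ZMod.natCast_self _
    push_cast at this
    rw [neg_pow, this]
    ring
  have hε3 : (3 : ZMod (3 ^ k)) * ε = 0 := by
    have : (3 : ZMod (3 ^ k)) * ε = -((-3 : ZMod (3 ^ k)) ^ ((k - 1) + 1)) := by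
      rw [hε, pow_succ]; ring
    rw [this, Nat.sub_add_cancel (by omega), h3k, neg_zero]
  have hε2 : ε * ε = 0 := by
    have : ε * ε = (-3 : ZMod (3 ^ k)) ^ (k + (k - 2)) := by
      rw [hε, ← pow_add]; congr 1; omega
    rw [this, pow_add, h3k, zero_mul]
  have hεne : ε ≠ 0 := by
    intro h
    have h2 : ((3 ^ (k - 1) : ℕ) : ZMod (3 ^ k)) = 0 := by
      push_cast
      calc (3 : ZMod (3 ^ k)) ^ (k - 1) = ((-1) * (-3)) ^ (k - 1) := by norm_num
        _ = (-1) ^ (k - 1) * ε := by rw [mul_pow, hε]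
        _ = 0 := by rw [h, mul_zero]
    rw [ZMod.natCast_eq_zero_iff] at h2
    have := Nat.le_of_dvd (by positivity) h2
    have := Nat.pow_lt_pow_right (by norm_num : 1 < 3) (by omega : k - 1 < k)
    omega
  haveI : Fact (1 < 3 ^ k) := ⟨by calc 1 < 3 ^ 2 := by norm_num
    _ ≤ 3 ^ k := Nat.pow_le_pow_right (by norm_num) hk⟩
  -- M has order dividing 3
  have hM3 : M ^ 3 = 1 := by
    apply Units.ext
    rw [Units.val_pow_eq_pow_val, hM, Units.val_one]
    rw [pow_succ, pow_two, Matrix.mul_fin_two, Matrix.mul_fin_two, Matrix.one_fin_two]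
    ext i j
    fin_cases i <;> fin_cases j <;> simp <;>
      first
        | linear_combination -hε3
        | linear_combination 3 * hε3 - 3 * hε2
        | linear_combination hε2 - hε3
        | linear_combination 2 * hε3 - 6 * hε2 + ε * hε2
  have hMne : M ≠ 1 := by
    intro h
    have h1 : (!![1, -3; 1, ε - 2] : Matrix (Fin 2) (Fin 2) (ZMod (3 ^ k))) = 1 := by
      rw [← hM, h, Units.val_one]
    have h2 := congrFun (congrFun h1 1) 0
    simp [Matrix.one_apply] at h2
  -- transfer to GL₂(𝔽₃)
  set m : H := ⟨M, hMH⟩ with hm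
  have hm3 : m ^ 3 = 1 := by
    apply Subtype.ext
    push_cast [hm]
    exact hM3
  have hmne : m ≠ 1 := fun h => hMne (congrArg Subtype.val h)
  have hx3 : e m ^ 3 = 1 := by rw [← map_pow, hm3, map_one]
  have hx1 : e m ≠ 1 := fun h => hmne (e.injective (by rw [h, map_one]))
  obtain ⟨y, hy⟩ := gl2_zmod3_conj_inv_of_order_three (e m) hx3 hx1
  -- pull the conjugator back
  have h2 : e.symm y * m * (e.symm y)⁻¹ = m⁻¹ := by
    have := congrArg e.symm hy
    simpa [map_mul, map_inv] using this
  -- pass to determinants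
  have h3 : (e.symm y : Matrix.GeneralLinearGroup (Fin 2) (ZMod (3 ^ k))) * M *
      ((e.symm y : Matrix.GeneralLinearGroup (Fin 2) (ZMod (3 ^ k))))⁻¹ = M⁻¹ := by
    have := congrArg (Subtype.val) h2
    push_cast at this
    exact this
  set φ := Matrix.GeneralLinearGroup.det
    (n := Fin 2) (R := ZMod (3 ^ k)) with hφ
  have hd : φ M = (φ M)⁻¹ := by
    have := congrArg φ h3
    rw [map_mul, map_mul, map_inv, map_inv] at this
    rw [← this]
    rw [mul_comm (φ _) (φ M), mul_assoc, mul_inv_cancel, mul_one]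
  have hd2 : (φ M) ^ 2 = 1 := by
    rw [pow_two]
    nth_rewrite 2 [hd]
    rw [mul_inv_cancel]
  have hd3 : (φ M) ^ 3 = 1 := by rw [← map_pow, hM3, map_one]
  have hd1 : φ M = 1 := by
    calc φ M = (φ M) ^ 3 * ((φ M) ^ 2)⁻¹ := by group
      _ = 1 := by rw [hd2, hd3, inv_one, one_mul]
  -- contradiction with the determinant value
  have hdet : ((φ M : (ZMod (3 ^ k))ˣ) : ZMod (3 ^ k)) = ε + 1 := by
    rw [hφ, Matrix.GeneralLinearGroup.val_det_apply, hM, Matrix.det_fin_two_of]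
    ring
  rw [hd1] at hdet
  simp at hdet
  apply hεne
  linear_combination hdet
end
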